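/- arXiv:2508.01528 — 3 statements merged into one kernel-verified Lean document; each statement's English description precedes it below -/
import Mathlib

section
/- Let Ω ⊂ ℝⁿ be open and bounded with C² boundary, and let δ_Ω := (1/3)·sup{δ ∈ (0, max_{x∈Ω} d_{∂Ω}(x)) : d_{∂Ω} is C²-smooth on Ω∖Ω_δ} > 0. Then for every x ∈ Ω∖Ω_{2δ_Ω}, the Laplacian of the boundary-distance function satisfies Δd_{∂Ω}(x) ≥ −n/δ_Ω. -/
open Set Metric Filter Topology Bornology MeasureTheory NNReal ENNReal

noncomputable section

/-- Distance to the boundary of `Ω`. -/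
def dBdry {n : ℕ} (Ω : Set (EuclideanSpace ℝ (Fin n))) (x : EuclideanSpace ℝ (Fin n)) : ℝ :=
  Metric.infDist x (frontier Ω)

/-- The Laplacian of a real-valued function, as the trace of its second derivative. -/
def lapl {n : ℕ} (φ : EuclideanSpace ℝ (Fin n) → ℝ) (x : EuclideanSpace ℝ (Fin n)) : ℝ :=
  ∑ i : Fin n, fderiv ℝ (fderiv ℝ φ) x (EuclideanSpace.single i 1) (EuclideanSpace.single i 1)

/-- The constant `δ_Ω`: one third of the supremum of those `δ` (below the inradius) such that
the boundary-distance function is `C²`-smooth on `Ω ∖ Ω_δ = {x ∈ Ω : d_∂Ω(x) ≤ δ}`. -/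
def deltaOm {n : ℕ} (Ω : Set (EuclideanSpace ℝ (Fin n))) : ℝ :=
  (1 / 3) * sSup {δ : ℝ | 0 < δ ∧ δ < sSup (dBdry Ω '' Ω) ∧
    ContDiffOn ℝ 2 (dBdry Ω) {x ∈ Ω | dBdry Ω x ≤ δ}}

/-- Oscillation of `f` over `s`: `sup_s f − inf_s f`. -/
def oscOn {n : ℕ} (f : EuclideanSpace ℝ (Fin n) → ℝ) (s : Set (EuclideanSpace ℝ (Fin n))) : ℝ :=
  sSup (f '' s) - sInf (f '' s)

/-- Viscosity subsolution of `λu + |Du|^p − ε·Δu = w` in `Ω` (with `C²` test functions). -/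
def ViscSubIn {n : ℕ} (Ω : Set (EuclideanSpace ℝ (Fin n))) (lam p ε : ℝ)
    (w u : EuclideanSpace ℝ (Fin n) → ℝ) : Prop :=
  ∀ x₀ ∈ Ω, ∀ φ : EuclideanSpace ℝ (Fin n) → ℝ, ContDiff ℝ 2 φ →
    IsLocalMaxOn (fun x => u x - φ x) Ω x₀ →
    lam * u x₀ + ‖gradient φ x₀‖ ^ p - ε * lapl φ x₀ - w x₀ ≤ 0

/-- Viscosity supersolution of `λv + |Dv|^p − ε·Δv = w` on `closure Ω` (`C²` test functions). -/
def ViscSupOn {n : ℕ} (Ω : Set (EuclideanSpace ℝ (Fin n))) (lam p ε : ℝ)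
    (w v : EuclideanSpace ℝ (Fin n) → ℝ) : Prop :=
  ∀ x₀ ∈ closure Ω, ∀ φ : EuclideanSpace ℝ (Fin n) → ℝ, ContDiff ℝ 2 φ →
    IsLocalMinOn (fun x => v x - φ x) (closure Ω) x₀ →
    0 ≤ lam * v x₀ + ‖gradient φ x₀‖ ^ p - ε * lapl φ x₀ - w x₀

/-- First-order (`ε = 0`) viscosity subsolution of `λu + |Du|^p = w` in `Ω`
(with `C¹` test functions). -/
def ViscSubIn1 {n : ℕ} (Ω : Set (EuclideanSpace ℝ (Fin n))) (lam p : ℝ)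
    (w u : EuclideanSpace ℝ (Fin n) → ℝ) : Prop :=
  ∀ x₀ ∈ Ω, ∀ φ : EuclideanSpace ℝ (Fin n) → ℝ, ContDiff ℝ 1 φ →
    IsLocalMaxOn (fun x => u x - φ x) Ω x₀ →
    lam * u x₀ + ‖gradient φ x₀‖ ^ p - w x₀ ≤ 0

/-- First-order (`ε = 0`) viscosity supersolution of `λv + |Dv|^p = w` on `closure Ω`
(with `C¹` test functions). -/
def ViscSupOn1 {n : ℕ} (Ω : Set (EuclideanSpace ℝ (Fin n))) (lam p : ℝ)
    (w v : EuclideanSpace ℝ (Fin n) → ℝ) : Prop :=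
  ∀ x₀ ∈ closure Ω, ∀ φ : EuclideanSpace ℝ (Fin n) → ℝ, ContDiff ℝ 1 φ →
    IsLocalMinOn (fun x => v x - φ x) (closure Ω) x₀ →
    0 ≤ lam * v x₀ + ‖gradient φ x₀‖ ^ p - w x₀

/-- Classical (`C²`) solution of `λu + |Du|^p − ε·Δu = w` in the open set `Ω`. -/
def ClassicalSolIn {n : ℕ} (Ω : Set (EuclideanSpace ℝ (Fin n))) (lam p ε : ℝ)
    (w u : EuclideanSpace ℝ (Fin n) → ℝ) : Prop :=
  ContDiffOn ℝ 2 u Ω ∧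
    ∀ x ∈ Ω, lam * u x + ‖gradient u x‖ ^ p - ε * lapl u x = w x

/-- The boundary condition `liminf_{Ω ∋ x → x₀} (u(x) − u(x₀))/|x − x₀|^α < 0` at every
boundary point `x₀`. -/
def BdryStrict {n : ℕ} (Ω : Set (EuclideanSpace ℝ (Fin n))) (α : ℝ)
    (u : EuclideanSpace ℝ (Fin n) → ℝ) : Prop :=
  ∀ x₀ ∈ frontier Ω,
    Filter.liminf (fun x => (u x - u x₀) / ‖x - x₀‖ ^ α) (𝓝[Ω] x₀) < 0

/-- `g` is semiconcave (with linear modulus) on `s` with semiconcavity constant `K`. -/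
def SemicOn {n : ℕ} (g : EuclideanSpace ℝ (Fin n) → ℝ)
    (s : Set (EuclideanSpace ℝ (Fin n))) (K : ℝ) : Prop :=
  ∀ x y : EuclideanSpace ℝ (Fin n), segment ℝ x y ⊆ s → ∀ t ∈ Icc (0:ℝ) 1,
    t * g x + (1 - t) * g y - g (t • x + (1 - t) • y) ≤ t * (1 - t) * (K * ‖x - y‖ ^ 2 / 2)

section AuxLemmas

/-- If `y ∈ closure s` and `y' ∉ closure s`, the segment from `y` to `y'` meets `frontier s`
within distance `dist y y'` of `y`. -/
lemma exists_frontier_dist_le {E : Type*} [NormedAddCommGroup E] [NormedSpace ℝ E] {s : Set E}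
    {y y' : E} (hy : y ∈ closure s) (hy' : y' ∉ closure s) :
    ∃ w ∈ frontier s, dist y w ≤ dist y y' := by
  set ψ : ℝ → E := fun u => y + u • (y' - y) with hψ
  have hψc : Continuous ψ := by fun_prop
  set A : Set ℝ := Icc 0 1 ∩ ψ ⁻¹' (closure s) with hA
  have hA0 : (0:ℝ) ∈ A := by
    constructor
    · exact ⟨le_rfl, zero_le_one⟩
    · simpa [hψ] using hy
  have hAne : A.Nonempty := ⟨0, hA0⟩
  have hAc : IsCompact A := (isCompact_Icc.inter_right (isClosed_closure.preimage hψc))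
  have hT : sSup A ∈ A := hAc.sSup_mem hAne
  set T := sSup A with hTdef
  obtain ⟨⟨hT0, hT1⟩, hTcl⟩ := hT
  have hT1' : T < 1 := by
    rcases lt_or_eq_of_le hT1 with h | h
    · exact h
    · exfalso; apply hy'
      have h2 := hTcl
      simp only [mem_preimage, hψ] at h2
      rw [h] at h2
      simpa using h2
  refine ⟨ψ T, ?_, ?_⟩
  · rw [frontier_eq_closure_inter_closure]  -- frontier s = closure s ∩ closure sᶜ
    constructor
    · exact hTcl
    · -- limit from the right
      have hne : (𝓝[>] T).NeBot := nhdsGT_neBot T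
      have hev : ∀ᶠ u in 𝓝[>] T, ψ u ∈ (s)ᶜ := by
        have h1 : ∀ᶠ u in 𝓝[>] T, u ≤ 1 := by
          have : Ioc T 1 ∈ 𝓝[>] T := Ioc_mem_nhdsGT_of_mem ⟨le_rfl, hT1'⟩
          filter_upwards [this] with u hu using hu.2
        filter_upwards [h1, self_mem_nhdsWithin] with u hu1 (huT : T < u)
        intro hus
        have : u ∈ A := ⟨⟨hT0.trans huT.le, hu1⟩, subset_closure hus⟩
        exact absurd (le_csSup hAc.bddAbove this) (not_le.mpr huT)
      have htt : Tendsto ψ (𝓝[>] T) (𝓝 (ψ T)) :=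
        (hψc.tendsto T).mono_left nhdsWithin_le_nhds
      exact mem_closure_of_tendsto htt hev
  · have : dist y (ψ T) = ‖T • (y' - y)‖ := by
      simp [hψ, dist_eq_norm]
    rw [this, norm_smul, dist_eq_norm]
    have : ‖y' - y‖ = ‖y - y'‖ := norm_sub_rev _ _
    rw [this]
    have h1 : |T| ≤ 1 := by rw [abs_of_nonneg hT0]; exact hT1
    calc |T| * ‖y - y'‖ ≤ 1 * ‖y - y'‖ := by
          exact mul_le_mul_of_nonneg_right (by simpa using h1) (norm_nonneg _)
      _ = ‖y - y'‖ := one_mul _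


/-- One-dimensional second derivative test at an interior local minimum. -/
lemma second_deriv_test_nonneg {f f' : ℝ → ℝ} {q ε : ℝ} (hε : 0 < ε)
    (hmin : ∀ s, |s| < ε → f 0 ≤ f s)
    (hd : ∀ s, |s| < ε → HasDerivAt f (f' s) s)
    (hd2 : HasDerivAt f' q 0) : 0 ≤ q := by
  by_contra hq
  push_neg at hq
  have hmin' : IsLocalMin f 0 := by
    rw [IsLocalMin, IsMinFilter]
    rw [Metric.eventually_nhds_iff]
    exact ⟨ε, hε, fun {y} hy => hmin y (by simpa [Real.dist_eq] using hy)⟩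
  have hf'0 : f' 0 = 0 := hmin'.hasDerivAt_eq_zero (hd 0 (by simpa using hε))
  have hslope : Tendsto (slope f' 0) (𝓝[>] (0:ℝ)) (𝓝 q) :=
    (hasDerivAt_iff_tendsto_slope.mp hd2).mono_left
      (nhdsWithin_mono _ (fun y hy => ne_of_gt hy))
  have hev : ∀ᶠ u in 𝓝[>] (0:ℝ), f' u < 0 := by
    have h2 : ∀ᶠ u in 𝓝[>] (0:ℝ), slope f' 0 u < q / 2 :=
      hslope.eventually_lt_const (by linarith)
    filter_upwards [h2, self_mem_nhdsWithin] with u hu (hu0 : 0 < u)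
    have : slope f' 0 u = f' u / u := by
      rw [slope_def_field, hf'0]; ring
    rw [this] at hu
    have := (div_lt_iff₀ hu0).mp hu
    nlinarith
  obtain ⟨a, ha, haev⟩ := (nhdsGT_basis (0:ℝ)).eventually_iff.mp hev
  set s₁ := min (a / 2) (ε / 2) with hs₁def
  have hs₁pos : 0 < s₁ := lt_min (by linarith) (by linarith)
  have hs₁a : s₁ < a := lt_of_le_of_lt (min_le_left _ _) (by linarith)
  have hs₁ε : s₁ < ε := lt_of_le_of_lt (min_le_right _ _) (by linarith)
  have hcont : ContinuousOn f (Icc 0 s₁) := by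
    intro u hu
    have : |u| < ε := by
      rw [abs_of_nonneg hu.1]; exact lt_of_le_of_lt hu.2 hs₁ε
    exact ((hd u this).continuousAt).continuousWithinAt
  have hder : ∀ u ∈ Ioo (0:ℝ) s₁, HasDerivAt f (f' u) u := by
    intro u hu
    exact hd u (by rw [abs_of_pos hu.1]; exact hu.2.trans hs₁ε)
  obtain ⟨c, hc, hceq⟩ := exists_hasDerivAt_eq_slope f f' hs₁pos hcont hder
  have h1 : 0 ≤ f' c := by
    rw [hceq]
    have : f 0 ≤ f s₁ := hmin s₁ (by rw [abs_of_pos hs₁pos]; exact hs₁ε)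
    have h2 : 0 < s₁ - 0 := by linarith
    exact div_nonneg (by linarith) h2.le
  have h2 : f' c < 0 := haev (show c ∈ Ioo 0 a from ⟨hc.1, hc.2.trans hs₁a⟩)
  linarith


open scoped RealInnerProductSpace

/-- At a point of differentiability of the distance to a compact set, at positive distance,
there is a unit direction in which the distance grows at unit rate. -/
lemma exists_unit_dir_deriv_one {E : Type*} [NormedAddCommGroup E] [NormedSpace ℝ E]
    {s : Set E} (hs : IsCompact s) (hne : s.Nonempty) {z : E}
    (hd : DifferentiableAt ℝ (fun y => infDist y s) z) (hρ : 0 < infDist z s) :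
    ∃ v : E, ‖v‖ = 1 ∧ HasDerivAt (fun h : ℝ => infDist (z + h • v) s) 1 0 := by
  set d : E → ℝ := fun y => infDist y s with hddef
  set ρ := infDist z s with hρdef
  obtain ⟨zb, hzb, hzbd⟩ := hs.exists_infDist_eq_dist hne z
  have hzbn : ‖z - zb‖ = ρ := by rw [← dist_eq_norm, ← hzbd]
  set v : E := ρ⁻¹ • (z - zb) with hvdef
  have hv1 : ‖v‖ = 1 := by
    rw [hvdef, norm_smul, hzbn, norm_inv, Real.norm_eq_abs, abs_of_pos hρ, inv_mul_cancel₀ hρ.ne']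
  have hseg : ∀ u : ℝ, u ∈ Icc 0 ρ → d (z - u • v) = ρ - u := by
    intro u hu
    have h1 : z - u • v = zb + (1 - u/ρ) • (z - zb) := by
      rw [hvdef, div_eq_mul_inv]
      module
    have hub : d (z - u • v) ≤ ρ - u := by
      have e1 : d (z - u • v) ≤ dist (z - u • v) zb := infDist_le_dist_of_mem hzb
      have e2 : dist (z - u • v) zb = ‖(1 - u/ρ) • (z - zb)‖ := by
        rw [h1, dist_eq_norm]
        congr 1
        abel
      have e3 : ‖(1 - u/ρ) • (z - zb)‖ = |1 - u/ρ| * ρ := by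
        rw [norm_smul, hzbn, Real.norm_eq_abs]
      have e4 : |1 - u/ρ| * ρ = ρ - u := by
        rw [abs_of_nonneg (by rw [sub_nonneg]; exact (div_le_one hρ).mpr hu.2)]
        field_simp
      linarith [e1, e2, e3, e4]
    have hlb : ρ - u ≤ d (z - u • v) := by
      have e5 : d z ≤ d (z - u • v) + dist z (z - u • v) := infDist_le_infDist_add_dist
      have hdist : dist z (z - u • v) = u := by
        have : z - (z - u • v) = u • v := by abel
        rw [dist_eq_norm, this, norm_smul, hv1, Real.norm_eq_abs, abs_of_nonneg hu.1, mul_one]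
      rw [hdist] at e5
      have : d z = ρ := rfl
      linarith
    linarith
  refine ⟨v, hv1, ?_⟩
  have hp : ∀ h : ℝ, HasDerivAt (fun h : ℝ => z + h • v) v h := by
    intro h
    simpa using ((hasDerivAt_id h).smul_const v).const_add z
  have hF : HasFDerivAt d (fderiv ℝ d z) (z + (0:ℝ) • v) := by
    have h0 : z + (0:ℝ) • v = z := by simp
    rw [h0]
    exact hd.hasFDerivAt
  have hcomp : HasDerivAt (fun h : ℝ => d (z + h • v)) (fderiv ℝ d z v) 0 := by
    have := hF.comp_hasDerivAt 0 (hp 0); exact this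
  have hleft : Tendsto (slope (fun h : ℝ => d (z + h • v)) 0) (𝓝[<] (0:ℝ))
      (𝓝 (fderiv ℝ d z v)) :=
    (hasDerivAt_iff_tendsto_slope.mp hcomp).mono_left
      (nhdsWithin_mono _ fun y hy => ne_of_lt hy)
  have hevone : slope (fun h : ℝ => d (z + h • v)) 0 =ᶠ[𝓝[<] (0:ℝ)] fun _ => (1:ℝ) := by
    have hIoo : Ioo (-ρ) 0 ∈ 𝓝[<] (0:ℝ) := Ioo_mem_nhdsLT_of_mem ⟨neg_lt_zero.mpr hρ, le_rfl⟩
    filter_upwards [hIoo] with h hh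
    have h1 : z + h • v = z - (-h) • v := by
      simp [sub_eq_add_neg, neg_smul]
    have h2 : d (z + h • v) = ρ + h := by
      rw [h1, hseg (-h) ⟨by linarith [hh.2], by linarith [hh.1]⟩]
      ring
    have h3 : d (z + (0:ℝ) • v) = ρ := by
      have h0 : z + (0:ℝ) • v = z := by simp
      rw [h0]
    rw [slope_def_field, h2, h3]
    simp only [add_sub_cancel_left, sub_zero]
    exact div_self (ne_of_lt hh.2)
  have hone : fderiv ℝ d z v = 1 := by
    have hne' : (𝓝[<] (0:ℝ)).NeBot := inferInstance
    exact tendsto_nhds_unique hleft (by rw [tendsto_congr' hevone]; exact tendsto_const_nhds)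
  rw [← hone]
  exact hcomp


/-- Key geometric lemma: if the boundary distance is `C²` on the strip `{d ≤ δ}` then from any
point `x` of the strip one can travel distance `t` while increasing the boundary distance
exactly by `t`, as long as `d x + t < δ`. -/
lemma exists_inner_center {E : Type*} [NormedAddCommGroup E] [NormedSpace ℝ E] [ProperSpace E]
    {Ω : Set E} (hΩo : IsOpen Ω)
    (hfrc : IsCompact (frontier Ω)) (hfrne : (frontier Ω).Nonempty)
    {δ t : ℝ} {x : E}
    (hx : x ∈ Ω) (ht : 0 < t)
    (hdx : 0 < infDist x (frontier Ω))
    (hrt : infDist x (frontier Ω) + t < δ)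
    (hC2 : ContDiffOn ℝ 2 (fun y => infDist y (frontier Ω))
      {y ∈ Ω | infDist y (frontier Ω) ≤ δ}) :
    ∃ z : E, dist z x = t ∧
      infDist z (frontier Ω) = infDist x (frontier Ω) + t := by
  set d : E → ℝ := fun y => infDist y (frontier Ω) with hddef
  set r : ℝ := d x with hrdef
  have dcont : Continuous d := continuous_infDist_pt _
  have dLip : ∀ a b : E, d a ≤ d b + dist a b := fun a b => infDist_le_infDist_add_dist
  set K : ℝ → Set E := fun s => closedBall x s ∩ closure Ω with hKdef
  set m : ℝ → ℝ := fun s => sSup (d '' K s) with hmdef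
  have hKc : ∀ s, IsCompact (K s) := fun s =>
    (isCompact_closedBall x s).inter_right isClosed_closure
  have hxK : ∀ s : ℝ, 0 ≤ s → x ∈ K s := fun s hs =>
    ⟨mem_closedBall_self hs, subset_closure hx⟩
  have hmax : ∀ s : ℝ, 0 ≤ s → ∃ z ∈ K s, (∀ y ∈ K s, d y ≤ d z) ∧ m s = d z := by
    intro s hs
    obtain ⟨z, hzK, hzmax'⟩ := (hKc s).exists_isMaxOn ⟨x, hxK s hs⟩ dcont.continuousOn
    have hzmax : ∀ y ∈ K s, d y ≤ d z := fun y hy => hzmax' hy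
    refine ⟨z, hzK, hzmax, le_antisymm ?_ ?_⟩
    · apply csSup_le (⟨d x, mem_image_of_mem d (hxK s hs)⟩)
      rintro _ ⟨y, hy, rfl⟩; exact hzmax y hy
    · exact le_csSup ⟨d z, by rintro _ ⟨y, hy, rfl⟩; exact hzmax y hy⟩ (mem_image_of_mem d hzK)
  have hbdd : ∀ s : ℝ, 0 ≤ s → BddAbove (d '' K s) := by
    intro s hs
    obtain ⟨z, _, hzmax, _⟩ := hmax s hs
    exact ⟨d z, by rintro _ ⟨y, hy, rfl⟩; exact hzmax y hy⟩
  have hmlb : ∀ s : ℝ, 0 ≤ s → r ≤ m s := fun s hs =>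
    le_csSup (hbdd s hs) (mem_image_of_mem d (hxK s hs))
  have hm0 : m 0 = r := by
    obtain ⟨z, hzK, _, hmz⟩ := hmax 0 le_rfl
    have : z = x := by
      have := hzK.1
      simpa [Metric.closedBall_zero] using this
    rw [hmz, this]
  have hmono : ∀ s₁ s₂ : ℝ, 0 ≤ s₁ → s₁ ≤ s₂ → m s₁ ≤ m s₂ := by
    intro s₁ s₂ h0 h12
    apply csSup_le_csSup (hbdd s₂ (h0.trans h12)) ⟨d x, mem_image_of_mem d (hxK s₁ h0)⟩
    exact image_mono (inter_subset_inter_left _ (closedBall_subset_closedBall h12))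
  have hlip : ∀ s₁ s₂ : ℝ, 0 ≤ s₁ → s₁ ≤ s₂ → m s₂ ≤ m s₁ + (s₂ - s₁) := by
    intro s₁ s₂ h0 h12
    obtain ⟨z₂, hz₂K, _, hmz₂⟩ := hmax s₂ (h0.trans h12)
    rw [hmz₂]
    by_cases hle : dist z₂ x ≤ s₁
    · have : d z₂ ≤ m s₁ := le_csSup (hbdd s₁ h0) (mem_image_of_mem d ⟨hle, hz₂K.2⟩)
      linarith
    · push_neg at hle
      set u : ℝ := dist z₂ x with hudef
      have hu0 : 0 < u := lt_of_le_of_lt h0 hle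
      have hus₂ : u ≤ s₂ := hz₂K.1
      set y' : E := x + (s₁ / u) • (z₂ - x) with hy'def
      have hz₂y' : dist z₂ y' = u - s₁ := by
        have h1 : z₂ - y' = (1 - s₁ / u) • (z₂ - x) := by
          rw [hy'def]; module
        rw [dist_eq_norm, h1, norm_smul, Real.norm_eq_abs,
          abs_of_nonneg (by rw [sub_nonneg]; exact (div_le_one hu0).mpr (hle.le))]
        rw [show ‖z₂ - x‖ = u by rw [hudef, dist_eq_norm]]
        field_simp
      have hy'x : dist y' x = s₁ := by
        have h1 : y' - x = (s₁ / u) • (z₂ - x) := by rw [hy'def]; abel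
        rw [dist_eq_norm, h1, norm_smul, Real.norm_eq_abs,
          abs_of_nonneg (div_nonneg h0 hu0.le)]
        rw [show ‖z₂ - x‖ = u by rw [hudef, dist_eq_norm]]
        field_simp
      by_cases hy' : y' ∈ closure Ω
      · have hK : y' ∈ K s₁ := ⟨by rw [mem_closedBall]; exact hy'x.le, hy'⟩
        have h2 : d z₂ ≤ d y' + dist z₂ y' := dLip z₂ y'
        have h3 : d y' ≤ m s₁ := le_csSup (hbdd s₁ h0) (mem_image_of_mem d hK)
        rw [hz₂y'] at h2
        linarith
      · obtain ⟨w, hw, hdw⟩ := exists_frontier_dist_le hz₂K.2 hy'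
        have h2 : d z₂ ≤ dist z₂ w := infDist_le_dist_of_mem hw
        have h4 : (0:ℝ) ≤ r := infDist_nonneg
        have h5 : r ≤ m s₁ := hmlb s₁ h0
        rw [hz₂y'] at hdw
        linarith
  -- continuity of m on [0, t]
  have habs : ∀ a b : ℝ, a ∈ Icc 0 t → b ∈ Icc 0 t → |m a - m b| ≤ |a - b| := by
    intro a b ha hb
    rcases le_total a b with h | h
    · have h1 := hmono a b ha.1 h
      have h2 := hlip a b ha.1 h
      rw [abs_sub_comm, abs_of_nonneg (by linarith), abs_sub_comm, abs_of_nonneg (by linarith)]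
      linarith
    · have h1 := hmono b a hb.1 h
      have h2 := hlip b a hb.1 h
      rw [abs_of_nonneg (by linarith), abs_of_nonneg (by linarith)]
      linarith
  have hmcont : ContinuousOn m (Icc 0 t) := by
    apply LipschitzOnWith.continuousOn (K := 1)
    intro a ha b hb
    rw [edist_dist, edist_dist]
    rw [ENNReal.coe_one, one_mul]
    apply ENNReal.ofReal_le_ofReal
    rw [Real.dist_eq, Real.dist_eq]
    exact habs a b ha hb
  -- the fencing argument
  have hfence : ∀ ⦃s⦄, s ∈ Icc 0 t → -(m s) ≤ -r - s := by
    apply image_le_of_liminf_slope_right_le_deriv_boundary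
      (f := fun s => -(m s)) (B := fun s => -r - s) (B' := fun _ => (-1:ℝ))
    · exact hmcont.neg
    · rw [hm0]; linarith
    · exact (continuousOn_const.sub continuousOn_id)
    · intro s _
      have : HasDerivAt (fun s : ℝ => -r - s) (-1) s := by
        simpa using ((hasDerivAt_id s).const_sub (-r : ℝ))
      exact this.hasDerivWithinAt
    · -- the Dini estimate
      intro s hs rr hrr
      obtain ⟨z, hzK, hzmax, hmz⟩ := hmax s hs.1
      have hdzlb : r ≤ d z := hmz ▸ hmlb s hs.1
      have hdzub : d z ≤ r + s := by
        have h1 : d z ≤ d x + dist z x := dLip z x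
        have h2 : dist z x ≤ s := hzK.1
        rw [← hrdef] at h1; linarith
      have hdzδ : d z < δ := by linarith [hs.2, hrt]
      have hzΩ : z ∈ Ω := by
        have hcl := hzK.2
        rw [closure_eq_self_union_frontier] at hcl
        rcases hcl with h | h
        · exact h
        · exfalso
          have : d z = 0 := infDist_zero_of_mem h
          have : (0:ℝ) < d z := lt_of_lt_of_le hdx hdzlb
          linarith
      -- z is in the open strip, d is differentiable there
      set U : Set E := Ω ∩ {y | d y < δ} with hUdef
      have hUopen : IsOpen U := hΩo.inter (isOpen_Iio.preimage dcont)
      have hzU : z ∈ U := ⟨hzΩ, hdzδ⟩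
      have hUsub : U ⊆ {y ∈ Ω | d y ≤ δ} := fun y hy => ⟨hy.1, le_of_lt hy.2⟩
      have hdiff : DifferentiableAt ℝ d z :=
        ((hC2.mono hUsub).contDiffAt (hUopen.mem_nhds hzU)).differentiableAt (by norm_num)
      obtain ⟨v, hv1, hder⟩ := exists_unit_dir_deriv_one hfrc hfrne hdiff
        (lt_of_lt_of_le hdx hdzlb)
      have hgrow : Tendsto (fun h : ℝ => (d (z + h • v) - d z) / h) (𝓝[>] (0:ℝ)) (𝓝 1) := by
        have h1 := (hasDerivAt_iff_tendsto_slope.mp hder).mono_left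
          (nhdsWithin_mono _ fun y (hy : (0:ℝ) < y) => ne_of_gt hy)
        apply h1.congr
        intro h
        rw [slope_def_field]
        have : z + (0:ℝ) • v = z := by simp
        rw [this, sub_zero]
      obtain ⟨ε, hε, hball⟩ := Metric.isOpen_iff.mp hΩo z hzΩ
      have hmap : Tendsto (fun ζ : ℝ => ζ - s) (𝓝[>] s) (𝓝[>] (0:ℝ)) := by
        apply tendsto_nhdsWithin_of_tendsto_nhds_of_eventually_within
        · have h1 : Tendsto (fun ζ : ℝ => ζ - s) (𝓝 s) (𝓝 (s - s)) :=
            (continuous_id.sub continuous_const).tendsto s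
          rw [sub_self] at h1
          exact h1.mono_left nhdsWithin_le_nhds
        · filter_upwards [self_mem_nhdsWithin] with ζ (hζ : s < ζ)
          exact sub_pos.mpr hζ
      have ev1 : ∀ᶠ ζ in 𝓝[>] s, ζ ∈ Ioo s (s + ε) :=
        Ioo_mem_nhdsGT_of_mem ⟨le_rfl, lt_add_of_pos_right s hε⟩
      have ev2 : ∀ᶠ ζ in 𝓝[>] s, -rr < (d (z + (ζ - s) • v) - d z) / (ζ - s) :=
        hmap.eventually (hgrow.eventually (eventually_gt_nhds (by linarith)))
      apply Filter.Eventually.frequently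
      filter_upwards [ev1, ev2, self_mem_nhdsWithin] with ζ h1 h2 (hζ : s < ζ)
      set h : ℝ := ζ - s with hhdef
      have hh : 0 < h := sub_pos.mpr hζ
      have hzv : z + h • v ∈ closure Ω := by
        apply subset_closure
        apply hball
        rw [mem_ball, dist_eq_norm]
        have : z + h • v - z = h • v := by abel
        rw [this, norm_smul, hv1, mul_one, Real.norm_eq_abs, abs_of_pos hh]
        linarith [h1.2]
      have hzball : z + h • v ∈ closedBall x ζ := by
        rw [mem_closedBall]
        calc dist (z + h • v) x ≤ dist (z + h • v) z + dist z x := dist_triangle _ _ _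
          _ ≤ h + s := by
              apply add_le_add _ hzK.1
              rw [dist_eq_norm]
              have : z + h • v - z = h • v := by abel
              rw [this, norm_smul, hv1, mul_one, Real.norm_eq_abs, abs_of_pos hh]
          _ = ζ := by rw [hhdef]; ring
      have hm2 : d (z + h • v) ≤ m ζ :=
        le_csSup (hbdd ζ (by linarith [hs.1])) (mem_image_of_mem d ⟨hzball, hzv⟩)
      rw [slope_def_field]
      rw [div_lt_iff₀ (by linarith : (0:ℝ) < ζ - s)]
      have h3 : -rr * h < d (z + h • v) - d z := (lt_div_iff₀ hh).mp h2
      have h4 : d z = m s := hmz.symm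
      have : -(m ζ) - -(m s) ≤ -(d (z + h • v)) + d z := by
        rw [h4]; linarith
      calc -(m ζ) - -(m s) ≤ -(d (z + h • v)) + d z := this
        _ < rr * h := by linarith
        _ = rr * (ζ - s) := by rw [hhdef]
  -- conclusion
  have hmt : r + t ≤ m t := by
    have := hfence (right_mem_Icc.mpr ht.le)
    linarith
  obtain ⟨z, hzK, _, hmz⟩ := hmax t ht.le
  have h1 : d z ≤ r + dist z x := by
    have := dLip z x; rw [← hrdef] at this; linarith
  have h2 : dist z x ≤ t := hzK.1
  have h3 : r + t ≤ d z := hmz ▸ hmt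
  have h4 : dist z x = t := le_antisymm h2 (by linarith)
  exact ⟨z, h4, le_antisymm (by linarith) h3⟩

/-- If `d` is touched from below at `x` by the cone `y ↦ d z - ‖y - z‖` with vertex at distance
`t` from `x` and matching value, then every diagonal second derivative of `d` at `x` is at least
`-1/t`. -/
lemma touch_second_deriv_ge {E : Type*} [NormedAddCommGroup E] [InnerProductSpace ℝ E]
    {d : E → ℝ} {x z : E} {t : ℝ} (ht : 0 < t) (hxz : ‖x - z‖ = t)
    (htouch : ∀ y, d z - ‖y - z‖ ≤ d y) (hdzx : d z = d x + t)
    {ε : ℝ} (hε : 0 < ε)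
    (hdiff : ∀ y ∈ ball x ε, DifferentiableAt ℝ d y)
    (hD1 : DifferentiableAt ℝ (fderiv ℝ d) x)
    {e : E} (he : ‖e‖ = 1) :
    -(1 / t) ≤ fderiv ℝ (fderiv ℝ d) x e e := by
  set φ : E → ℝ := fun y => d z - (⟪y - z, y - z⟫ + t ^ 2) / (2 * t) with hφdef
  have hφle : ∀ y, φ y ≤ d y := by
    intro y
    have h3 : ⟪y - z, y - z⟫ = ‖y - z‖ ^ 2 := real_inner_self_eq_norm_sq _
    have h1 : ‖y - z‖ ≤ (⟪y - z, y - z⟫ + t ^ 2) / (2 * t) := by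
      rw [h3, le_div_iff₀ (by linarith : (0:ℝ) < 2 * t)]
      nlinarith [sq_nonneg (‖y - z‖ - t)]
    have h2 := htouch y
    simp only [hφdef]
    linarith
  have hφx : φ x = d x := by
    have h3 : ⟪x - z, x - z⟫ = ‖x - z‖ ^ 2 := real_inner_self_eq_norm_sq _
    simp only [hφdef, h3, hxz]
    rw [hdzx]
    field_simp
    ring
  set p : ℝ → E := fun s => x + s • e with hpdef
  have hp : ∀ s : ℝ, HasDerivAt p e s := fun s => by
    have h := ((hasDerivAt_id s).smul_const e).const_add x
    rw [one_smul] at h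
    exact h
  have hp0 : p 0 = x := by simp [hpdef]
  have hpball : ∀ s : ℝ, |s| < ε → p s ∈ ball x ε := by
    intro s hs
    rw [mem_ball, dist_eq_norm]
    have : p s - x = s • e := by simp [hpdef]
    rw [this, norm_smul, he, mul_one, Real.norm_eq_abs]
    exact hs
  set ψ : ℝ → ℝ := fun s => d (p s) - φ (p s) with hψdef
  set ψ' : ℝ → ℝ := fun s => fderiv ℝ d (p s) e + ⟪p s - z, e⟫ / t with hψ'def
  have hmin : ∀ s, |s| < ε → ψ 0 ≤ ψ s := by
    intro s _
    have h1 : ψ 0 = 0 := by simp [hψdef, hp0, hφx]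
    have h2 : 0 ≤ ψ s := sub_nonneg.mpr (hφle (p s))
    linarith
  have hd1 : ∀ s, |s| < ε → HasDerivAt ψ (ψ' s) s := by
    intro s hs
    have h1 : HasDerivAt (fun u => d (p u)) (fderiv ℝ d (p s) e) s :=
      ((hdiff (p s) (hpball s hs)).hasFDerivAt).comp_hasDerivAt s (hp s)
    have h2 : HasDerivAt (fun u => ⟪p u - z, p u - z⟫)
        (⟪p s - z, e⟫ + ⟪e, p s - z⟫) s :=
      ((hp s).sub_const z).inner ℝ ((hp s).sub_const z)
    have h3 : HasDerivAt (fun u => φ (p u))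
        (-((⟪p s - z, e⟫ + ⟪e, p s - z⟫) / (2 * t))) s := by
      have := ((h2.add_const (t ^ 2)).div_const (2 * t)).const_sub (d z)
      simpa [hφdef] using this
    have h4 := h1.sub h3
    have h5 : fderiv ℝ d (p s) e - (-((⟪p s - z, e⟫ + ⟪e, p s - z⟫) / (2 * t))) = ψ' s := by
      simp only [hψ'def]
      rw [real_inner_comm e (p s - z)]
      field_simp
      ring
    rw [h5] at h4
    exact h4
  have hd2 : HasDerivAt ψ' (fderiv ℝ (fderiv ℝ d) x e e + ⟪e, e⟫ / t) 0 := by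
    have hF : HasDerivAt (fun s => fderiv ℝ d (p s)) (fderiv ℝ (fderiv ℝ d) x e) 0 := by
      have h0 : HasFDerivAt (fderiv ℝ d) (fderiv ℝ (fderiv ℝ d) x) (p 0) := by
        rw [hp0]; exact hD1.hasFDerivAt
      exact h0.comp_hasDerivAt 0 (hp 0)
    have hFe : HasDerivAt (fun s => fderiv ℝ d (p s) e) (fderiv ℝ (fderiv ℝ d) x e e) 0 := by
      have := hF.clm_apply (hasDerivAt_const 0 e)
      simpa using this
    have hIn : HasDerivAt (fun s => ⟪p s - z, e⟫ / t) (⟪e, e⟫ / t) 0 := by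
      have h2 : HasDerivAt (fun u => ⟪p u - z, e⟫) (⟪p 0 - z, (0:E)⟫ + ⟪e, e⟫) 0 :=
        ((hp 0).sub_const z).inner ℝ (hasDerivAt_const 0 e)
      have h3 := h2.div_const t
      simpa using h3
    exact hFe.add hIn
  have := second_deriv_test_nonneg hε hmin hd1 hd2
  have hee : ⟪e, e⟫ = 1 := by
    rw [real_inner_self_eq_norm_sq, he]; norm_num
  rw [hee] at this
  linarith

end AuxLemmas

/-- For a bounded open set `Ω` with `C²` boundary (encoded, as in the paper,
by `0 < δ_Ω`, which means the boundary-distance function is `C²`-smooth on `Ω ∖ Ω_δ` for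
the relevant `δ`), the Laplacian of the boundary-distance function satisfies
`Δ d_∂Ω (x) ≥ −n/δ_Ω` on `Ω ∖ Ω_{2δ_Ω}`. -/
theorem laplacian_distance_lower_bound {n : ℕ} (Ω : Set (EuclideanSpace ℝ (Fin n)))
    (hΩo : IsOpen Ω) (hΩb : IsBounded Ω) (hΩne : Ω.Nonempty)
    (hδ : 0 < deltaOm Ω) :
    ∀ x ∈ Ω, dBdry Ω x ≤ 2 * deltaOm Ω →
      -((n : ℝ) / deltaOm Ω) ≤ lapl (dBdry Ω) x := by
  intro x hx hxd
  -- the frontier is nonempty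
  have hfrne : (frontier Ω).Nonempty := by
    by_contra hne
    rw [not_nonempty_iff_eq_empty] at hne
    have hd0 : ∀ y, dBdry Ω y = 0 := fun y => by rw [dBdry, hne, infDist_empty]
    have himg : dBdry Ω '' Ω = {0} := by
      apply subset_antisymm
      · rintro _ ⟨y, _, rfl⟩; simp [hd0 y]
      · rintro y hy
        rw [mem_singleton_iff] at hy
        obtain ⟨w, hw⟩ := hΩne
        exact ⟨w, hw, by rw [hd0 w, hy]⟩
    have hS : {δ : ℝ | 0 < δ ∧ δ < sSup (dBdry Ω '' Ω) ∧
        ContDiffOn ℝ 2 (dBdry Ω) {x ∈ Ω | dBdry Ω x ≤ δ}} = ∅ := by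
      rw [himg]
      apply eq_empty_iff_forall_notMem.mpr
      rintro δ ⟨h1, h2, -⟩
      rw [csSup_singleton] at h2
      linarith
    rw [deltaOm, hS, Real.sSup_empty] at hδ
    linarith
  -- the frontier is compact
  have hfrc : IsCompact (frontier Ω) :=
    IsCompact.of_isClosed_subset hΩb.isCompact_closure isClosed_frontier frontier_subset_closure
  -- positive distance to the boundary
  have hdx : 0 < dBdry Ω x := by
    rw [dBdry, ← isClosed_frontier.notMem_iff_infDist_pos hfrne]
    intro hw
    exact absurd ⟨hx, hw⟩ (eq_empty_iff_forall_notMem.mp hΩo.inter_frontier_eq x)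
  -- facts about the set of good δ
  set S : Set ℝ := {δ : ℝ | 0 < δ ∧ δ < sSup (dBdry Ω '' Ω) ∧
    ContDiffOn ℝ 2 (dBdry Ω) {x ∈ Ω | dBdry Ω x ≤ δ}} with hSdef
  have hSsup : sSup S = 3 * deltaOm Ω := by
    rw [deltaOm]; ring
  have hSne : S.Nonempty := by
    by_contra hne
    rw [not_nonempty_iff_eq_empty] at hne
    rw [deltaOm, ← hSdef, hne, Real.sSup_empty] at hδ
    linarith
  -- the main pointwise bound for each admissible t
  have key : ∀ t : ℝ, 0 < t → t < deltaOm Ω → -((n : ℝ) / t) ≤ lapl (dBdry Ω) x := by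
    intro t ht htδ
    obtain ⟨δ, hδS, hδgt⟩ := exists_lt_of_lt_csSup hSne
      (show dBdry Ω x + t < sSup S by rw [hSsup]; linarith)
    obtain ⟨hδpos, hδlt, hC2⟩ := hδS
    have hC2' : ContDiffOn ℝ 2 (fun y => infDist y (frontier Ω))
        {y ∈ Ω | infDist y (frontier Ω) ≤ δ} := hC2
    obtain ⟨z, hzx, hzd⟩ := exists_inner_center hΩo hfrc hfrne hx ht hdx hδgt hC2'
    -- differentiability of d near x
    set U : Set (EuclideanSpace ℝ (Fin n)) := Ω ∩ {y | dBdry Ω y < δ} with hUdef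
    have hUopen : IsOpen U := hΩo.inter (isOpen_Iio.preimage (continuous_infDist_pt _))
    have hxU : x ∈ U := ⟨hx, by simp only [mem_setOf_eq]; linarith⟩
    have hUsub : U ⊆ {y ∈ Ω | dBdry Ω y ≤ δ} := fun y hy => ⟨hy.1, le_of_lt hy.2⟩
    have hCx : ContDiffAt ℝ 2 (dBdry Ω) x :=
      (hC2.mono hUsub).contDiffAt (hUopen.mem_nhds hxU)
    obtain ⟨ε, hε, hball⟩ := Metric.isOpen_iff.mp hUopen x hxU
    have hdiff : ∀ y ∈ ball x ε, DifferentiableAt ℝ (dBdry Ω) y := by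
      intro y hy
      exact (((hC2.mono hUsub).contDiffAt (hUopen.mem_nhds (hball hy))).differentiableAt
        (by norm_num))
    have hD1 : DifferentiableAt ℝ (fderiv ℝ (dBdry Ω)) x :=
      (hCx.fderiv_right (m := 1) (by norm_num)).differentiableAt one_ne_zero
    -- touching data
    have hxz : ‖x - z‖ = t := by rw [← dist_eq_norm, dist_comm]; exact hzx
    have htouch : ∀ y, dBdry Ω z - ‖y - z‖ ≤ dBdry Ω y := by
      intro y
      have h1 : dBdry Ω z ≤ dBdry Ω y + dist z y := infDist_le_infDist_add_dist
      rw [dist_comm, dist_eq_norm] at h1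
      linarith
    have hdzx : dBdry Ω z = dBdry Ω x + t := hzd
    -- per coordinate bound
    have hA : ∀ i : Fin n, -(1 / t) ≤ fderiv ℝ (fderiv ℝ (dBdry Ω)) x
        (EuclideanSpace.single i 1) (EuclideanSpace.single i 1) := by
      intro i
      apply touch_second_deriv_ge ht hxz htouch hdzx hε hdiff hD1
      rw [EuclideanSpace.norm_single]
      norm_num
    rw [lapl]
    calc -((n : ℝ) / t) = ∑ _i : Fin n, -(1 / t) := by
          rw [Finset.sum_const, Finset.card_univ, Fintype.card_fin]
          push_cast
          ring
      _ ≤ _ := Finset.sum_le_sum fun i _ => hA i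
  -- pass to the limit t → deltaOm Ω
  by_contra hc
  push_neg at hc
  set L := lapl (dBdry Ω) x with hLdef
  rcases Nat.eq_zero_or_pos n with hn | hn
  · subst hn
    have h0 := key (deltaOm Ω / 2) (by linarith) (by linarith)
    norm_num at h0 hc
    linarith
  · have hnpos : (0:ℝ) < n := by exact_mod_cast hn
    have hL : 0 < -L := by
      have h1 : 0 < (n : ℝ) / deltaOm Ω := div_pos hnpos hδ
      linarith
    have h2 : (n : ℝ) / deltaOm Ω < -L := by linarith
    have h3 : (n : ℝ) / (-L) < deltaOm Ω := by
      rw [div_lt_iff₀ hL]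
      rw [div_lt_iff₀ hδ] at h2
      nlinarith
    obtain ⟨t, ht1, ht2⟩ := exists_between h3
    have htpos : 0 < t := lt_of_le_of_lt (le_of_lt (div_pos hnpos hL)) ht1
    have := key t htpos ht2
    -- -(n/t) ≤ L, but n/(-L) < t means n/t < -L, i.e. L < -(n/t)
    have h4 : (n : ℝ) < -L * t := by
      rw [div_lt_iff₀ hL] at ht1
      linarith
    have h5 : (n : ℝ) / t < -L := by
      rw [div_lt_iff₀ htpos]
      nlinarith
    linarith
end
end

section
/- Let Ω ⊂ ℝⁿ be open and bounded with C² boundary, let p > 2, λ > 0, ε > 0, and let f, g ∈ C(cl(Ω)). Let u^ε ∈ C²(Ω) ∩ C(cl(Ω)) be a classical solution of λu^ε + |Du^ε|^p − εΔu^ε = f in Ω satisfying liminf_{Ω∋x→x₀} (u^ε(x) − u^ε(x₀))/|x−x₀|^{α_p} < 0 for every x₀ ∈ ∂Ω. Let v : cl(Ω) → ℝ be Lipschitz, a viscosity subsolution of λv + |Dv|^p = g in Ω, and semiconvex in Ω with semiconvexity constant K. Then min_{x ∈ cl(Ω)} (u^ε(x) − v(x)) ≥ (1/λ)·( −K·n·ε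 + min_{cl(Ω)} (f − g) ). -/
open Set Metric Filter Topology Bornology MeasureTheory NNReal ENNReal

noncomputable section

/- ### Auxiliary lemmas ### -/

section Aux

lemma neg_of_deriv_neg {q : ℝ → ℝ} {h : ℝ} (hh : 0 < h) (hq : Differentiable ℝ q)
    (hq0 : q 0 = 0) (hq' : ∀ t ∈ Ioo (0:ℝ) h, deriv q t < 0) : q h < 0 := by
  have hs := strictAntiOn_of_deriv_neg (convex_Icc (0:ℝ) h) (hq.continuous.continuousOn)
    (by rwa [interior_Icc])
  have := hs (left_mem_Icc.mpr hh.le) (right_mem_Icc.mpr hh.le) hh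
  simpa [hq0] using this

lemma second_deriv_ge {ψ : ℝ → ℝ} (hψ : ContDiff ℝ 2 ψ) {K r : ℝ} (hr : 0 < r)
    (hkey : ∀ h : ℝ, 0 < h → h < r → -K * h^2 ≤ ψ h + ψ (-h) - 2 * ψ 0) :
    -K ≤ deriv (deriv ψ) 0 := by
  by_contra hlt
  push_neg at hlt
  set D := deriv (deriv ψ) 0 with hD
  set c : ℝ := (D + -K)/2 with hc
  have hDc : D < c := by simp only [hc]; linarith
  have hcK : c < -K := by simp only [hc]; linarith
  have hψ1 : ContDiff ℝ 1 (deriv ψ) := by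
    have h2 : ContDiff ℝ ((1:ℕ)+1 : ℕ) ψ := by norm_num; exact hψ
    exact (contDiff_succ_iff_deriv.mp h2).2.2
  have hψ'd : Differentiable ℝ (deriv ψ) := hψ1.differentiable one_ne_zero
  have hψd : Differentiable ℝ ψ := hψ.differentiable two_ne_zero
  have hcont : Continuous (deriv (deriv ψ)) := hψ1.continuous_deriv le_rfl
  have hev : ∀ᶠ t in nhds (0:ℝ), deriv (deriv ψ) t < c :=
    (hcont.continuousAt (x := (0:ℝ))).eventually_lt continuousAt_const hDc
  obtain ⟨δ, hδ, hball⟩ := Metric.eventually_nhds_iff_ball.mp hev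
  set h : ℝ := min δ r / 2 with hhdef
  have hh : 0 < h := by positivity
  have hhδ : h < δ := by
    have : min δ r ≤ δ := min_le_left _ _
    simp only [hhdef]; linarith
  have hhr : h < r := by
    have : min δ r ≤ r := min_le_right _ _
    simp only [hhdef]; linarith
  have hsecond : ∀ t : ℝ, |t| < δ → deriv (deriv ψ) t < c := by
    intro t ht
    exact hball t (by simpa [Real.dist_eq] using ht)
  have branch : ∀ s : ℝ, s = 1 ∨ s = -1 →
      ψ (s*h) - ψ 0 - deriv ψ 0 * (s*h) - c * h^2/2 < 0 := by
    intro s hs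
    have hs2 : s * s = 1 := by rcases hs with h | h <;> simp [h]
    have hsabs : ∀ t : ℝ, |s * t| = |t| := by
      intro t; rcases hs with h | h <;> simp [h, abs_mul]
    set q : ℝ → ℝ := fun t => ψ (s*t) - ψ 0 - deriv ψ 0 * (s*t) - c * t^2/2 with hqdef
    have hq1 : ∀ t, HasDerivAt q (s * deriv ψ (s*t) - deriv ψ 0 * s - c * t) t := by
      intro t
      have h1 : HasDerivAt (fun t : ℝ => ψ (s*t)) (s * deriv ψ (s*t)) t := by
        have := ((hψd (s*t)).hasDerivAt).comp t ((hasDerivAt_id t).const_mul s)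
        simpa [mul_comm, Function.comp_def] using this
      have h2 : HasDerivAt (fun t : ℝ => deriv ψ 0 * (s*t)) (deriv ψ 0 * s) t := by
        simpa using ((hasDerivAt_id t).const_mul s).const_mul (deriv ψ 0)
      have h3 : HasDerivAt (fun t : ℝ => c * t^2/2) (c * t) t := by
        have := ((hasDerivAt_pow 2 t).const_mul c).div_const 2
        exact this.congr_deriv (by norm_num; ring)
      exact (h1.sub_const (ψ 0)).sub h2 |>.sub h3
    have hqdiff : Differentiable ℝ q := fun t => (hq1 t).differentiableAt
    have hqderiv : deriv q = fun t => s * deriv ψ (s*t) - deriv ψ 0 * s - c * t :=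
      funext fun t => (hq1 t).deriv
    have hq'0 : deriv q 0 = 0 := by
      rw [hqderiv]; simp; ring
    have hq'd : ∀ t, HasDerivAt (deriv q) (deriv (deriv ψ) (s*t) - c) t := by
      intro t
      rw [hqderiv]
      have h1 : HasDerivAt (fun t : ℝ => deriv ψ (s*t)) (s * deriv (deriv ψ) (s*t)) t := by
        have := ((hψ'd (s*t)).hasDerivAt).comp t ((hasDerivAt_id t).const_mul s)
        simpa [mul_comm, Function.comp_def] using this
      have := ((h1.const_mul s).sub_const (deriv ψ 0 * s)).sub ((hasDerivAt_id t).const_mul c)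
      have heq : s * (s * deriv (deriv ψ) (s*t)) - c = deriv (deriv ψ) (s*t) - c := by
        rw [← mul_assoc, hs2, one_mul]
      exact this.congr_deriv (by rw [mul_one, heq])
    have hq'neg : ∀ t ∈ Ioo (0:ℝ) h, deriv q t < 0 := by
      intro t ht
      refine neg_of_deriv_neg ht.1 (fun y => (hq'd y).differentiableAt) hq'0 ?_
      intro y hy
      rw [(hq'd y).deriv]
      have : |s * y| < δ := by
        rw [hsabs, abs_of_pos hy.1]
        exact lt_trans (lt_trans hy.2 ht.2) hhδ
      have := hsecond _ this
      linarith
    have := neg_of_deriv_neg hh hqdiff (by simp [hqdef]) hq'neg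
    simpa [hqdef] using this
  have b1 := branch 1 (Or.inl rfl)
  have b2 := branch (-1) (Or.inr rfl)
  have hk := hkey h hh hhr
  simp only [one_mul, neg_one_mul] at b1 b2
  nlinarith [sq_nonneg h, hh]

variable {E : Type*} [NormedAddCommGroup E] [NormedSpace ℝ E]

lemma line_contDiff (x e : E) : ContDiff ℝ 2 (fun t : ℝ => x + t • e) :=
  contDiff_const.add (contDiff_id.smul contDiff_const)

lemma line_second_deriv {φ : E → ℝ} (hφ : ContDiff ℝ 2 φ) (x e : E) :
    deriv (deriv (fun t : ℝ => φ (x + t • e))) 0 = fderiv ℝ (fderiv ℝ φ) x e e := by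
  have hφd : Differentiable ℝ φ := hφ.differentiable two_ne_zero
  have hL : ∀ t : ℝ, HasDerivAt (fun t : ℝ => x + t • e) e t := by
    intro t
    simpa using ((hasDerivAt_id t).smul_const e).const_add x
  have hd1 : ∀ t : ℝ, HasDerivAt (fun t : ℝ => φ (x + t • e)) (fderiv ℝ φ (x + t • e) e) t :=
    fun t => ((hφd (x + t • e)).hasFDerivAt).comp_hasDerivAt t (hL t)
  have hderiv1 : deriv (fun t : ℝ => φ (x + t • e)) = fun t => fderiv ℝ φ (x + t • e) e :=
    funext fun t => (hd1 t).deriv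
  rw [hderiv1]
  have hF : ContDiff ℝ 1 (fderiv ℝ φ) := by
    have h2 : ContDiff ℝ ((1:ℕ)+1 : ℕ) φ := by norm_num; exact hφ
    exact (contDiff_succ_iff_fderiv.mp h2).2.2
  have hFd : HasFDerivAt (fderiv ℝ φ) (fderiv ℝ (fderiv ℝ φ) x) (x + (0:ℝ) • e) := by
    simpa using ((hF.differentiable one_ne_zero) x).hasFDerivAt
  have hcomp : HasDerivAt (fun t : ℝ => fderiv ℝ φ (x + t • e)) (fderiv ℝ (fderiv ℝ φ) x e) 0 :=
    hFd.comp_hasDerivAt 0 (hL 0)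
  have heval : HasDerivAt (fun t : ℝ => fderiv ℝ φ (x + t • e) e)
      (fderiv ℝ (fderiv ℝ φ) x e e) 0 :=
    (ContinuousLinearMap.apply ℝ ℝ e).hasFDerivAt.comp_hasDerivAt 0 hcomp
  exact heval.deriv

lemma cutoff_exists {E : Type*} [NormedAddCommGroup E] [InnerProductSpace ℝ E]
    [FiniteDimensional ℝ E]
    {Ω : Set E} (hΩ : IsOpen Ω) {u : E → ℝ} (hu : ContDiffOn ℝ 2 u Ω)
    {x : E} {r : ℝ} (hr : 0 < r) (hball : closedBall x r ⊆ Ω) :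
    ∃ φ : E → ℝ, ContDiff ℝ 2 φ ∧ ∀ y ∈ ball x (r/2), φ y = u y := by
  have hbump : (0:ℝ) < r/2 := by positivity
  let c : ContDiffBump x := ⟨r/2, r, hbump, by linarith⟩
  refine ⟨fun y => c y * u y, ?_, ?_⟩
  · rw [contDiff_iff_contDiffAt]
    intro y
    by_cases hy : y ∈ Ω
    · exact (c.contDiff.contDiffAt).mul (hu.contDiffAt (hΩ.mem_nhds hy))
    · have hyc : y ∈ (closedBall x r)ᶜ := fun hmem => hy (hball hmem)
      have hopen : IsOpen ((closedBall x r)ᶜ) := Metric.isClosed_closedBall.isOpen_compl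
      refine contDiffAt_const (c := 0) |>.congr_of_eventuallyEq ?_
      filter_upwards [hopen.mem_nhds hyc] with z hz
      have hz' : (r : ℝ) ≤ dist z x := by
        simpa [Metric.mem_closedBall, not_le] using (le_of_lt (by
          simpa [Metric.mem_closedBall, not_le] using hz))
      simp [c.zero_of_le_dist hz']
  · intro y hy
    have : c y = 1 := c.one_of_mem_closedBall (Metric.ball_subset_closedBall hy)
    simp only []
    rw [this, one_mul]

end Aux
set_option maxHeartbeats 1000000 in
/-- If `u^ε` is a classical solution of `λu + |Du|^p − εΔu = f` in `Ω`
satisfying the strict boundary liminf condition and `v` is a Lipschitz, semiconvex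
(with constant `K`) viscosity subsolution of `λv + |Dv|^p = g` in `Ω`, then
`min_{cl Ω}(u^ε − v) ≥ (1/λ)·(−K·n·ε + min_{cl Ω}(f − g))`.
The `C²`-boundary assumption is encoded by `0 < δ_Ω`. -/
theorem lower_bound_against_semiconvex {n : ℕ} (Ω : Set (EuclideanSpace ℝ (Fin n)))
    (hΩo : IsOpen Ω) (hΩb : IsBounded Ω) (hΩne : Ω.Nonempty)
    (hC2 : 0 < deltaOm Ω)
    (p lam ε : ℝ) (hp : 2 < p) (hlam : 0 < lam) (hε : 0 < ε)
    (f g : EuclideanSpace ℝ (Fin n) → ℝ)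
    (hf : ContinuousOn f (closure Ω)) (hg : ContinuousOn g (closure Ω))
    (uε : EuclideanSpace ℝ (Fin n) → ℝ)
    (huε_cont : ContinuousOn uε (closure Ω))
    (huε_sol : ClassicalSolIn Ω lam p ε f uε)
    (huε_bdry : BdryStrict Ω ((p - 2) / (p - 1)) uε)
    (v : EuclideanSpace ℝ (Fin n) → ℝ) (Lv : ℝ≥0)
    (hv_lip : LipschitzOnWith Lv v (closure Ω))
    (hv_sub : ViscSubIn1 Ω lam p g v)
    (K : ℝ) (hv_scx : SemicOn (fun x => -(v x)) Ω K) :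
    ∀ x ∈ closure Ω,
      (1 / lam) * (-(K * (n : ℝ) * ε) + sInf ((fun z => f z - g z) '' closure Ω))
        ≤ uε x - v x := by
  intro x hx
  have hcl : IsCompact (closure Ω) := hΩb.isCompact_closure
  have hclne : (closure Ω).Nonempty := hΩne.closure
  have hcont : ContinuousOn (fun y => uε y - v y) (closure Ω) :=
    huε_cont.sub (hv_lip.continuousOn)
  obtain ⟨xb, hxbcl, hminOn⟩ := hcl.exists_isMinOn hclne hcont
  have hmin : ∀ y ∈ closure Ω, uε xb - v xb ≤ uε y - v y := fun y hy => hminOn hy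
  -- Step 1: the minimum point is interior
  have hxbΩ : xb ∈ Ω := by
    by_contra hxb
    have hfr : xb ∈ frontier Ω :=
      ⟨hxbcl, by rwa [hΩo.interior_eq]⟩
    set α : ℝ := (p - 2) / (p - 1) with hα
    have hp1 : (0:ℝ) < p - 1 := by linarith
    have hα0 : 0 < α := div_pos (by linarith) hp1
    have hα1 : α < 1 := (div_lt_one hp1).mpr (by linarith)
    have hne : (𝓝[Ω] xb).NeBot := mem_closure_iff_nhdsWithin_neBot.mp hxbcl
    set F : EuclideanSpace ℝ (Fin n) → ℝ :=
      fun y => (uε y - uε xb) / ‖y - xb‖ ^ α with hFdef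
    set G : EuclideanSpace ℝ (Fin n) → ℝ :=
      fun y => -(Lv:ℝ) * ‖y - xb‖ ^ ((1:ℝ) - α) with hGdef
    have hGF : ∀ᶠ y in 𝓝[Ω] xb, G y ≤ F y := by
      filter_upwards [self_mem_nhdsWithin] with y hy
      have hycl : y ∈ closure Ω := subset_closure hy
      have hyne : y - xb ≠ 0 := sub_ne_zero.mpr (fun h => hxb (h ▸ hy))
      have hnorm : (0:ℝ) < ‖y - xb‖ := norm_pos_iff.mpr hyne
      have h1 : v y - v xb ≤ uε y - uε xb := by have := hmin y hycl; linarith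
      have h2 : -(Lv:ℝ) * ‖y - xb‖ ≤ v y - v xb := by
        have hd := hv_lip.dist_le_mul y hycl xb hxbcl
        rw [Real.dist_eq, dist_eq_norm] at hd
        have := neg_abs_le (v y - v xb)
        linarith
      have h3 : -(Lv:ℝ) * ‖y - xb‖ ≤ uε y - uε xb := le_trans h2 h1
      have hpow : (0:ℝ) < ‖y - xb‖ ^ α := Real.rpow_pos_of_pos hnorm α
      have hEq : G y = (-(Lv:ℝ) * ‖y - xb‖) / ‖y - xb‖ ^ α := by
        have hsub : ‖y - xb‖ ^ ((1:ℝ) - α) = ‖y - xb‖ / ‖y - xb‖ ^ α := by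
          rw [Real.rpow_sub hnorm, Real.rpow_one]
        simp only [hGdef, hsub]; ring
      rw [hEq]
      exact div_le_div_of_nonneg_right h3 hpow.le
    have hGtend : Tendsto G (𝓝[Ω] xb) (𝓝 0) := by
      have h1 : Tendsto (fun y : EuclideanSpace ℝ (Fin n) => ‖y - xb‖) (𝓝[Ω] xb) (𝓝 0) := by
        have hc : Continuous fun y : EuclideanSpace ℝ (Fin n) => ‖y - xb‖ :=
          (continuous_id.sub continuous_const).norm
        have h0 : ‖xb - xb‖ = (0:ℝ) := by simp
        exact tendsto_nhdsWithin_of_tendsto_nhds (h0 ▸ (hc.continuousAt (x := xb)))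
      have h2 : ContinuousAt (fun t : ℝ => t ^ ((1:ℝ) - α)) 0 :=
        Real.continuousAt_rpow_const 0 _ (Or.inr (by linarith))
      have h3 : Tendsto (fun y => ‖y - xb‖ ^ ((1:ℝ)-α)) (𝓝[Ω] xb)
          (𝓝 ((0:ℝ) ^ ((1:ℝ)-α))) := h2.tendsto.comp h1
      rw [Real.zero_rpow (by linarith : (1:ℝ) - α ≠ 0)] at h3
      have := h3.const_mul (-(Lv:ℝ))
      simpa [hGdef] using this
    have hSmem : ∀ a : ℝ, a < 0 → ∀ᶠ y in 𝓝[Ω] xb, a ≤ F y := by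
      intro a ha
      filter_upwards [hGF, hGtend.eventually (eventually_gt_nhds ha)] with y h1 h2
      linarith
    have hbad : Filter.liminf F (𝓝[Ω] xb) < 0 := huε_bdry xb hfr
    rw [Filter.liminf_eq] at hbad
    by_cases hbdd : BddAbove {a : ℝ | ∀ᶠ y in 𝓝[Ω] xb, a ≤ F y}
    · have h2 : sSup {a : ℝ | ∀ᶠ y in 𝓝[Ω] xb, a ≤ F y} / 2
          ∈ {a : ℝ | ∀ᶠ y in 𝓝[Ω] xb, a ≤ F y} := hSmem _ (by linarith)
      have := le_csSup hbdd h2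
      linarith
    · rw [Real.sSup_of_not_bddAbove hbdd] at hbad
      exact absurd hbad (lt_irrefl 0)
  -- Step 2: cutoff construction
  obtain ⟨ρ, hρ, hρΩ⟩ := Metric.isOpen_iff.mp hΩo xb hxbΩ
  set r : ℝ := ρ/2 with hrdef
  have hr : 0 < r := by positivity
  have hrΩ : closedBall xb r ⊆ Ω := by
    intro y hy
    refine hρΩ ?_
    rw [mem_ball]
    rw [mem_closedBall] at hy
    simp only [hrdef] at hy
    linarith
  obtain ⟨φ, hφC2, hφeq⟩ := cutoff_exists hΩo huε_sol.1 hr hrΩ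
  have hballΩ : ball xb (r/2) ⊆ Ω := fun y hy =>
    hrΩ (closedBall_subset_closedBall (by linarith) (ball_subset_closedBall hy))
  have hxballmem : xb ∈ ball xb (r/2) := mem_ball_self (by positivity)
  have hEqev : φ =ᶠ[𝓝 xb] uε := by
    filter_upwards [ball_mem_nhds xb (show (0:ℝ) < r/2 by positivity)] with y hy
    exact hφeq y hy
  have hgrad : gradient φ xb = gradient uε xb := by
    unfold gradient
    rw [hEqev.fderiv_eq]
  have hfd2 : fderiv ℝ (fderiv ℝ φ) xb = fderiv ℝ (fderiv ℝ uε) xb :=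
    hEqev.fderiv.fderiv_eq
  -- Step 3: second-derivative lower bound from semiconvexity
  have hKe : ∀ i : Fin n, -K ≤ fderiv ℝ (fderiv ℝ φ) xb
      (EuclideanSpace.single i 1) (EuclideanSpace.single i 1) := by
    intro i
    set e : EuclideanSpace ℝ (Fin n) := EuclideanSpace.single i (1:ℝ) with he
    have hnorme : ‖e‖ = 1 := by simp [he, EuclideanSpace.norm_single]
    have hψC2 : ContDiff ℝ 2 (fun t : ℝ => φ (xb + t • e)) := hφC2.comp (line_contDiff xb e)
    rw [← line_second_deriv hφC2 xb e]
    refine second_deriv_ge hψC2 (show (0:ℝ) < r/2 by positivity) ?_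
    intro h hh0 hhr2
    have hmem : ∀ s : ℝ, |s| ≤ h → xb + s • e ∈ ball xb (r/2) := by
      intro s hs
      rw [mem_ball, dist_eq_norm]
      have : xb + s • e - xb = s • e := by module
      rw [this, norm_smul, hnorme, mul_one, Real.norm_eq_abs]
      linarith
    have hm1 := hmem h (by rw [abs_of_pos hh0])
    have hm2 := hmem (-h) (by rw [abs_neg, abs_of_pos hh0])
    have hu1 : φ (xb + h • e) = uε (xb + h • e) := hφeq _ hm1
    have hu2 : φ (xb + (-h) • e) = uε (xb + (-h) • e) := hφeq _ hm2
    have hu0 : φ (xb + (0:ℝ) • e) = uε xb := by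
      have : xb + (0:ℝ) • e = xb := by module
      rw [this]; exact hφeq xb hxballmem
    have hseg : segment ℝ (xb + h • e) (xb + (-h) • e) ⊆ Ω :=
      Subset.trans ((convex_ball xb (r/2)).segment_subset hm1 hm2) hballΩ
    have hsc := hv_scx (xb + h • e) (xb + (-h) • e) hseg (1/2) ⟨by norm_num, by norm_num⟩
    have hmid : (1/2 : ℝ) • (xb + h • e) + (1 - 1/2 : ℝ) • (xb + (-h) • e) = xb := by module
    have hdiff : (xb + h • e) - (xb + (-h) • e) = (2*h) • e := by module
    have hdist : ‖(xb + h • e) - (xb + (-h) • e)‖ = 2*h := by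
      rw [hdiff, norm_smul, hnorme, mul_one, Real.norm_eq_abs, abs_of_pos (by linarith)]
    rw [hmid, hdist] at hsc
    have ha := hmin (xb + h • e) (subset_closure (hballΩ hm1))
    have hb := hmin (xb + (-h) • e) (subset_closure (hballΩ hm2))
    rw [hu1, hu2, hu0]
    nlinarith [hsc, ha, hb]
  -- Step 4: Laplacian bound
  have hlaplb : -(K * (n:ℝ)) ≤ lapl uε xb := by
    have hsum : ∑ _i : Fin n, (-K) ≤ ∑ i : Fin n, fderiv ℝ (fderiv ℝ uε) xb
        (EuclideanSpace.single i 1) (EuclideanSpace.single i 1) := by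
      refine Finset.sum_le_sum fun i _ => ?_
      rw [← hfd2]; exact hKe i
    rw [Finset.sum_const, Finset.card_univ, Fintype.card_fin, nsmul_eq_mul] at hsum
    unfold lapl
    nlinarith [hsum]
  -- Step 5: viscosity subsolution test at xb
  have hmax : IsLocalMaxOn (fun y => v y - φ y) Ω xb := by
    have hev : ∀ᶠ y in 𝓝[Ω] xb, v y - φ y ≤ v xb - φ xb := by
      filter_upwards [self_mem_nhdsWithin, mem_nhdsWithin_of_mem_nhds
        (ball_mem_nhds xb (show (0:ℝ) < r/2 by positivity))] with y hyΩ hyb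
      rw [hφeq y hyb, hφeq xb hxballmem]
      have := hmin y (subset_closure hyΩ); linarith
    exact hev
  have hsub := hv_sub xb hxbΩ φ (hφC2.of_le one_le_two) hmax
  rw [hgrad] at hsub
  -- Step 6: conclusion
  have heqn := huε_sol.2 xb hxbΩ
  have himg : IsCompact ((fun z => f z - g z) '' closure Ω) :=
    hcl.image_of_continuousOn (hf.sub hg)
  have hbdd : BddBelow ((fun z => f z - g z) '' closure Ω) := himg.bddBelow
  have hsinf : sInf ((fun z => f z - g z) '' closure Ω) ≤ f xb - g xb :=
    csInf_le hbdd ⟨xb, hxbcl, rfl⟩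
  have hKnε : ε * (-(K * (n:ℝ))) ≤ ε * lapl uε xb := mul_le_mul_of_nonneg_left hlaplb hε.le
  have key : -(K * (n:ℝ) * ε) + sInf ((fun z => f z - g z) '' closure Ω)
      ≤ lam * (uε xb - v xb) := by nlinarith [heqn, hsub, hsinf, hKnε]
  have hfin : (1 / lam) * (-(K * (n:ℝ) * ε) + sInf ((fun z => f z - g z) '' closure Ω))
      ≤ uε xb - v xb := by
    rw [one_div, inv_mul_le_iff₀ hlam]
    exact key.trans_eq rfl
  exact le_trans hfin (hmin x hx)
end
end

section
/- Let Ω ⊂ ℝⁿ be open and bounded, let p > 1 with conjugate exponent q = p/(p−1), let c_p = p^{−1/(p−1)}·(1 − 1/p), and let λ > 0. Let f : cl(Ω) → ℝ be continuous, nonnegative, with compact support contained in Ω, and semiconcave in Ω with semiconcavity constant c_f. Define u : cl(Ω) → ℝ by u(x) = inf{ ∫_{−∞}^{0} e^{λs}·( c_p·|η̇(s)|^q + f(η(s)) ) ds : η absolutely continuous from (−∞,0] to cl(Ω), η(0) = x }. Then u is semiconcave in Ω with semiconcavity constant c_f/λ. -/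
open Set Metric Filter Topology Bornology MeasureTheory NNReal ENNReal

noncomputable section

/- ### Auxiliary lemmas -/

lemma integrableOn_exp_mul_Iic' {lam : ℝ} (hlam : 0 < lam) :
    IntegrableOn (fun s => Real.exp (lam * s)) (Iic (0:ℝ)) := by
  apply integrableOn_Iic_of_intervalIntegral_norm_bounded (1/lam) (0:ℝ)
    (a := fun (i:ℕ) => -(i:ℝ)) (l := atTop)
    (fun i => ((Real.continuous_exp.comp (continuous_const.mul continuous_id)).integrableOn_Ioc))
    (tendsto_neg_atBot_iff.mpr tendsto_natCast_atTop_atTop)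
  filter_upwards with i
  simp only [Function.comp, id]
  show ∫ x in (-(i:ℝ))..0, ‖Real.exp (lam * x)‖ ≤ 1 / lam
  have h1 : ∫ x in (-(i:ℝ))..0, ‖Real.exp (lam * x)‖ = ∫ x in (-(i:ℝ))..0, Real.exp (lam * x) := by
    congr 1; ext x; exact Real.norm_of_nonneg (Real.exp_pos _).le
  rw [h1, intervalIntegral.integral_comp_mul_left (fun u => Real.exp u) hlam.ne']
  rw [integral_exp]
  rw [smul_eq_mul]
  rw [mul_zero]
  have : Real.exp (lam * -(i:ℝ)) > 0 := Real.exp_pos _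
  rw [Real.exp_zero]
  rw [one_div]
  have hli : lam⁻¹ > 0 := inv_pos.mpr hlam
  nlinarith [Real.exp_pos (lam * -(i:ℝ))]

lemma integral_exp_mul_Iic' {lam : ℝ} (hlam : 0 < lam) :
    ∫ s in Iic (0:ℝ), Real.exp (lam * s) = 1/lam := by
  have := integral_Iic_of_hasDerivAt_of_tendsto' (a := (0:ℝ))
    (f := fun s => Real.exp (lam * s) / lam) (f' := fun s => Real.exp (lam * s)) (m := 0)
    ?_ (integrableOn_exp_mul_Iic' hlam) ?_
  · rw [this]; simp [Real.exp_zero]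
  · intro x _
    have : HasDerivAt (fun s => Real.exp (lam * s)) (Real.exp (lam * x) * lam) x := by
      simpa [mul_comm, Function.comp_def] using (Real.hasDerivAt_exp (lam * x)).comp x
        ((hasDerivAt_id x).const_mul lam)
    simpa [div_eq_mul_inv, mul_assoc, mul_inv_cancel₀ hlam.ne'] using this.div_const lam
  · have : Tendsto (fun s : ℝ => lam * s) atBot atBot :=
      (tendsto_const_mul_atBot_of_pos hlam).mpr tendsto_id
    have h2 : Tendsto (fun s : ℝ => Real.exp (lam * s)) atBot (𝓝 0) :=
      Real.tendsto_exp_atBot.comp this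
    simpa using h2.div_const lam

lemma lintegral_exp_mul_Iic {lam : ℝ} (hlam : 0 < lam) :
    ∫⁻ s in Iic (0:ℝ), ENNReal.ofReal (Real.exp (lam * s)) = ENNReal.ofReal (1/lam) := by
  rw [← integral_exp_mul_Iic' hlam]
  rw [← ofReal_integral_eq_lintegral_ofReal (integrableOn_exp_mul_Iic' hlam)]
  exact ae_of_all _ fun s => (Real.exp_pos _).le


/-- slope transitivity: if slope(a,b) ≤ slope(b,c) then slope(a,b) ≤ slope(a,c) ≤ slope(b,c). -/
lemma slope_mid {g : ℝ → ℝ} {a b c : ℝ} (hab : a < b) (hbc : b < c)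
    (h : (g b - g a)/(b-a) ≤ (g c - g b)/(c-b)) :
    (g b - g a)/(b-a) ≤ (g c - g a)/(c-a) ∧ (g c - g a)/(c-a) ≤ (g c - g b)/(c-b) := by
  have h1 : (0:ℝ) < b - a := by linarith
  have h2 : (0:ℝ) < c - b := by linarith
  have h3 : (0:ℝ) < c - a := by linarith
  rw [div_le_div_iff₀ h1 h2] at h
  constructor
  · rw [div_le_div_iff₀ h1 h3]; nlinarith
  · rw [div_le_div_iff₀ h3 h2]; nlinarith

/-- glue convexity on two overlapping intervals -/
lemma convexOn_glue {g : ℝ → ℝ} {A A' B B' : ℝ} (hAA' : A ≤ A') (hA'B : A' < B) (hBB' : B ≤ B')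
    (h1 : ConvexOn ℝ (Icc A B) g) (h2 : ConvexOn ℝ (Icc A' B') g) :
    ConvexOn ℝ (Icc A B') g := by
  apply convexOn_of_slope_mono_adjacent (convex_Icc A B')
  intro p q r hp hr hpq hqr
  -- wlog notation
  by_cases hrB : r ≤ B
  · exact h1.slope_mono_adjacent ⟨hp.1, by linarith⟩ ⟨by linarith [hp.1], hrB⟩ hpq hqr
  by_cases hpA' : A' ≤ p
  · exact h2.slope_mono_adjacent ⟨hpA', by linarith [hr.2]⟩ ⟨by linarith, hr.2⟩ hpq hqr
  push_neg at hrB hpA'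
  have hBr : B < r := hrB
  have hpA'' : p < A' := hpA'
  have hmem1 : ∀ {s : ℝ}, p ≤ s → s ≤ B → s ∈ Icc A B := fun hs1 hs2 => ⟨le_trans hp.1 hs1, hs2⟩
  have hmem2 : ∀ {s : ℝ}, A' ≤ s → s ≤ r → s ∈ Icc A' B' := fun hs1 hs2 => ⟨hs1, le_trans hs2 hr.2⟩
  rcases lt_trichotomy q A' with hqA' | rfl | hA'q
  · -- q < A' : pick u, w in (A', B)
    obtain ⟨u, hu1, hu2⟩ : ∃ u, A' < u ∧ u < B := ⟨(A'+B)/2, by linarith, by linarith⟩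
    obtain ⟨w, hw1, hw2⟩ : ∃ w, u < w ∧ w < B := ⟨(u+B)/2, by linarith, by linarith⟩
    have squ : (g u - g q)/(u-q) ≤ (g w - g u)/(w-u) :=
      h1.slope_mono_adjacent (hmem1 hpq.le (by linarith)) (hmem1 (by linarith) hw2.le)
        (by linarith) hw1
    have spq : (g q - g p)/(q-p) ≤ (g u - g q)/(u-q) :=
      h1.slope_mono_adjacent (hmem1 le_rfl (by linarith)) (hmem1 (by linarith) hu2.le)
        hpq (by linarith)
    have suw : (g w - g u)/(w-u) ≤ (g r - g w)/(r-w) :=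
      h2.slope_mono_adjacent (hmem2 hu1.le (by linarith)) (hmem2 (by linarith) le_rfl)
        hw1 (by linarith)
    -- slope(q,r) ≥ slope(q,u)
    have hur : (g u - g q)/(u-q) ≤ (g r - g u)/(r-u) := by
      have := (slope_mid hw1 (by linarith : w < r) suw).1
      linarith [squ.trans this]
    have := (slope_mid (by linarith : q < u) (by linarith : u < r) hur).1
    linarith [spq.trans this]
  · -- q = A'
    obtain ⟨u, hu1, hu2⟩ : ∃ u, q < u ∧ u < B := ⟨(q+B)/2, by linarith, by linarith⟩
    have spq : (g q - g p)/(q-p) ≤ (g u - g q)/(u-q) :=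
      h1.slope_mono_adjacent (hmem1 le_rfl (by linarith)) (hmem1 (by linarith) hu2.le)
        hpq hu1
    have squ : (g u - g q)/(u-q) ≤ (g r - g u)/(r-u) :=
      h2.slope_mono_adjacent (hmem2 le_rfl (by linarith)) (hmem2 (by linarith) le_rfl)
        hu1 (by linarith)
    have := (slope_mid hu1 (by linarith : u < r) squ).1
    linarith [spq.trans this]
  · -- A' < q
    by_cases hqB : q < B
    · obtain ⟨u, hu1, hu2⟩ : ∃ u, q < u ∧ u < B := ⟨(q+B)/2, by linarith, by linarith⟩
      have spq : (g q - g p)/(q-p) ≤ (g u - g q)/(u-q) :=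
        h1.slope_mono_adjacent (hmem1 le_rfl (by linarith)) (hmem1 (by linarith) hu2.le)
          hpq hu1
      have squ : (g u - g q)/(u-q) ≤ (g r - g u)/(r-u) :=
        h2.slope_mono_adjacent (hmem2 hA'q.le (by linarith)) (hmem2 (by linarith) le_rfl)
          hu1 (by linarith)
      have := (slope_mid hu1 (by linarith : u < r) squ).1
      linarith [spq.trans this]
    · -- B ≤ q : pick u < w in (A', B)
      push_neg at hqB
      obtain ⟨u, hu1, hu2⟩ : ∃ u, A' < u ∧ u < B := ⟨(A'+B)/2, by linarith, by linarith⟩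
      obtain ⟨w, hw1, hw2⟩ : ∃ w, u < w ∧ w < B := ⟨(u+B)/2, by linarith, by linarith⟩
      have spu : (g u - g p)/(u-p) ≤ (g w - g u)/(w-u) :=
        h1.slope_mono_adjacent (hmem1 le_rfl (by linarith)) (hmem1 (by linarith) hw2.le)
          (by linarith) hw1
      have suw : (g w - g u)/(w-u) ≤ (g q - g w)/(q-w) :=
        h2.slope_mono_adjacent (hmem2 hu1.le (by linarith)) (hmem2 (by linarith) hqr.le)
          hw1 (by linarith)
      have swq : (g q - g w)/(q-w) ≤ (g r - g q)/(r-q) :=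
        h2.slope_mono_adjacent (hmem2 (by linarith) (by linarith)) (hmem2 (by linarith) le_rfl)
          (by linarith) hqr
      -- slope(p,q) ≤ slope(w,q)
      have hpw : (g w - g p)/(w-p) ≤ (g q - g w)/(q-w) := by
        have := (slope_mid (by linarith : p < u) hw1 spu).2
        linarith [this.trans suw]
      have := (slope_mid (by linarith : p < w) (by linarith : w < q) hpw).2
      linarith [this.trans swq]

/-- local convexity (on all subintervals of length ρ of [0,1]) implies convexity on [0,1] -/
lemma convexOn_of_locally {g : ℝ → ℝ} {ρ : ℝ} (hρ : 0 < ρ)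
    (h : ∀ a b : ℝ, 0 ≤ a → b ≤ 1 → b - a ≤ ρ → ConvexOn ℝ (Icc a b) g) :
    ConvexOn ℝ (Icc (0:ℝ) 1) g := by
  have key : ∀ k : ℕ, ConvexOn ℝ (Icc (0:ℝ) (min 1 (ρ/2 + k*(ρ/2)))) g := by
    intro k
    induction k with
    | zero =>
      simpa using h 0 (min 1 (ρ/2)) le_rfl (min_le_left _ _)
        (by simp; right; linarith)
    | succ k ih =>
      by_cases h1 : (1:ℝ) ≤ ρ/2 + k*(ρ/2)
      · have e1 : min 1 (ρ/2 + k*(ρ/2)) = 1 := min_eq_left h1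
        have e2 : min 1 (ρ/2 + (k+1:ℕ)*(ρ/2)) = 1 := by
          apply min_eq_left; push_cast; nlinarith
        rw [e2]; rw [e1] at ih; exact ih
      · push_neg at h1
        have e1 : min 1 (ρ/2 + k*(ρ/2)) = ρ/2 + k*(ρ/2) := min_eq_right h1.le
        rw [e1] at ih
        have hk0 : (0:ℝ) ≤ k*(ρ/2) := by positivity
        apply convexOn_glue (A' := k*(ρ/2)) hk0 (by linarith) ?_ ih ?_
        · exact le_min (by linarith) (by push_cast; linarith)
        · apply h _ _ hk0 (min_le_left _ _)
          have : min 1 (ρ/2 + (k+1:ℕ)*(ρ/2)) ≤ ρ/2 + (k+1:ℕ)*(ρ/2) := min_le_right _ _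
          push_cast at this ⊢; linarith
  obtain ⟨k, hk⟩ := exists_nat_ge ((1:ℝ)/(ρ/2))
  have h1 : (1:ℝ) ≤ ρ/2 + k*(ρ/2) := by
    have : (1:ℝ) ≤ k*(ρ/2) := by
      rw [div_le_iff₀ (by linarith : (0:ℝ) < ρ/2)] at hk; linarith [hk]
    linarith
  have := key k
  rwa [min_eq_left h1] at this


lemma cwa_prim {E : Type*} [NormedAddCommGroup E] [NormedSpace ℝ E] {v : ℝ → E}
    (hv : ∀ t ≤ (0:ℝ), IntegrableOn v (Ioc t 0)) {t₀ : ℝ} (ht₀ : t₀ ≤ 0) :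
    ContinuousWithinAt (fun t => ∫ s in Ioc t 0, v s) (Iic (0:ℝ)) t₀ := by
  have hint : IntervalIntegrable v volume (min 0 (t₀-1)) (max 0 0) := by
    rw [min_eq_right (by linarith), max_self]
    exact (intervalIntegrable_iff_integrableOn_Ioc_of_le (by linarith)).2
      (hv _ (by linarith))
  have hF : ContinuousWithinAt (fun b => ∫ x in (0:ℝ)..b, v x) (Icc (t₀-1) 0) t₀ :=
    intervalIntegral.continuousWithinAt_primitive (measure_singleton _) hint
  have hP : ContinuousWithinAt (fun t => ∫ s in Ioc t 0, v s) (Icc (t₀-1) 0) t₀ := by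
    apply hF.neg.congr
    · intro t ht
      simp only [Pi.neg_apply]
      rw [← intervalIntegral.integral_symm, intervalIntegral.integral_of_le ht.2]
    · simp only [Pi.neg_apply]
      rw [← intervalIntegral.integral_symm, intervalIntegral.integral_of_le ht₀]
  have hset : 𝓝[Iic (0:ℝ)] t₀ = 𝓝[Icc (t₀-1) 0] t₀ := by
    rw [nhdsWithin_restrict' (Iic (0:ℝ)) (Ici_mem_nhds (by linarith : t₀ - 1 < t₀))]
    congr 1
    rw [inter_comm, Ici_inter_Iic]
  rw [ContinuousWithinAt, hset]
  exact hP


def costSet {n : ℕ} (Ω : Set (EuclideanSpace ℝ (Fin n))) (q cp lam : ℝ)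
    (f : EuclideanSpace ℝ (Fin n) → ℝ) (x : EuclideanSpace ℝ (Fin n)) : Set ℝ≥0∞ :=
  {c : ℝ≥0∞ | ∃ η v : ℝ → EuclideanSpace ℝ (Fin n),
    (∀ s ≤ (0:ℝ), η s ∈ closure Ω) ∧ η 0 = x ∧
    (∀ t ≤ (0:ℝ), MeasureTheory.IntegrableOn v (Set.Ioc t 0)) ∧
    (∀ t ≤ (0:ℝ), η 0 - η t = ∫ s in Set.Ioc t 0, v s) ∧
    c = ∫⁻ s in Set.Iic (0:ℝ),
          ENNReal.ofReal (Real.exp (lam * s) * (cp * ‖v s‖ ^ q + f (η s)))}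

lemma const_traj_mem {n : ℕ} {Ω : Set (EuclideanSpace ℝ (Fin n))}
    {q cp lam : ℝ} (hq0 : q ≠ 0) (hlam : 0 < lam)
    {f : EuclideanSpace ℝ (Fin n) → ℝ} {w : EuclideanSpace ℝ (Fin n)}
    (hw : w ∈ closure Ω) :
    ENNReal.ofReal (f w / lam) ∈ costSet Ω q cp lam f w := by
  refine ⟨fun _ => w, fun _ => 0, fun s _ => hw, rfl, fun t _ => integrableOn_zero, ?_, ?_⟩
  · intro t _; simp
  · simp only [norm_zero, Real.zero_rpow hq0, mul_zero, zero_add]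
    have h2 : ∀ s : ℝ, ENNReal.ofReal (Real.exp (lam * s) * f w)
        = ENNReal.ofReal (Real.exp (lam * s)) * ENNReal.ofReal (f w) :=
      fun s => ENNReal.ofReal_mul (Real.exp_pos _).le
    simp only [h2]
    rw [lintegral_mul_const' _ _ ENNReal.ofReal_ne_top, lintegral_exp_mul_Iic hlam,
      ← ENNReal.ofReal_mul (by positivity), one_div, inv_mul_eq_div]


lemma confine {n : ℕ} {Ω : Set (EuclideanSpace ℝ (Fin n))}
    {q cp lam : ℝ} (hq0 : q ≠ 0) (hcp : 0 ≤ cp)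
    {f : EuclideanSpace ℝ (Fin n) → ℝ} (hf0 : ∀ w, 0 ≤ f w)
    {K : Set (EuclideanSpace ℝ (Fin n))} (hfK : ∀ w, w ∉ K → f w = 0)
    {δ : ℝ} (hδ : 0 < δ)
    {z : EuclideanSpace ℝ (Fin n)} (hzK : infDist z K < δ/2)
    {η v : ℝ → EuclideanSpace ℝ (Fin n)}
    (hηΩ : ∀ s ≤ (0:ℝ), η s ∈ closure Ω) (hη0 : η 0 = z)
    (hvint : ∀ t ≤ (0:ℝ), MeasureTheory.IntegrableOn v (Set.Ioc t 0))
    (hηint : ∀ t ≤ (0:ℝ), η 0 - η t = ∫ s in Set.Ioc t 0, v s) :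
    ∃ η' v' : ℝ → EuclideanSpace ℝ (Fin n),
      (∀ s ≤ (0:ℝ), η' s ∈ closure Ω) ∧ η' 0 = z ∧
      (∀ t ≤ (0:ℝ), MeasureTheory.IntegrableOn v' (Set.Ioc t 0)) ∧
      (∀ t ≤ (0:ℝ), η' 0 - η' t = ∫ s in Set.Ioc t 0, v' s) ∧
      (∀ s ≤ (0:ℝ), infDist (η' s) K ≤ δ/2) ∧
      (∫⁻ s in Set.Iic (0:ℝ),
          ENNReal.ofReal (Real.exp (lam * s) * (cp * ‖v' s‖ ^ q + f (η' s)))) ≤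
        ∫⁻ s in Set.Iic (0:ℝ),
          ENNReal.ofReal (Real.exp (lam * s) * (cp * ‖v s‖ ^ q + f (η s))) := by
  classical
  set T : Set ℝ := {s : ℝ | s ≤ 0 ∧ δ/2 < infDist (η s) K} with hT
  by_cases hTne : T.Nonempty
  swap
  · refine ⟨η, v, hηΩ, hη0, hvint, hηint, ?_, le_rfl⟩
    intro s hs
    by_contra h
    exact hTne ⟨s, hs, lt_of_not_ge h⟩
  -- t₀ = last exit time
  have hbdd : BddAbove T := ⟨0, fun s hs => hs.1⟩
  set t₀ : ℝ := sSup T with ht₀def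
  have ht₀0 : t₀ ≤ 0 := csSup_le hTne fun s hs => hs.1
  -- continuity of η within Iic 0
  have hηeq : ∀ s ≤ (0:ℝ), η s = z - ∫ u in Set.Ioc s 0, v u := by
    intro s hs
    have := hηint s hs
    rw [hη0] at this
    linear_combination (norm := module) -this
  have hηcont : ∀ s ≤ (0:ℝ), ContinuousWithinAt η (Iic 0) s := by
    intro s hs
    apply ((continuousWithinAt_const (b := z)).sub (cwa_prim hvint hs)).congr
    · intro r hr; exact hηeq r hr
    · exact hηeq s hs
  have hFcont : ∀ s ≤ (0:ℝ), ContinuousWithinAt (fun r => infDist (η r) K) (Iic 0) s :=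
    fun s hs => (continuous_infDist_pt K).continuousAt.comp_continuousWithinAt (hηcont s hs)
  -- t₀ ∉ T
  have ht₀T : t₀ ∉ T := by
    intro h
    have ht₀lt : t₀ < 0 := by
      rcases lt_or_eq_of_le ht₀0 with h' | h'
      · exact h'
      · exfalso
        have h2 : δ/2 < infDist (η t₀) K := h.2
        rw [h', hη0] at h2
        linarith
    have hmem : {r : ℝ | δ/2 < infDist (η r) K} ∈ 𝓝[Iic (0:ℝ)] t₀ := by
      exact (hFcont t₀ ht₀0).preimage_mem_nhdsWithin (Ioi_mem_nhds h.2)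
    rw [Metric.mem_nhdsWithin_iff] at hmem
    obtain ⟨ε, hε, hball⟩ := hmem
    set s : ℝ := min (t₀ + ε/2) 0 with hsdef
    have hs0 : s ≤ 0 := min_le_right _ _
    have hst : t₀ < s := lt_min (by linarith) ht₀lt
    have hsb : s ∈ Metric.ball t₀ ε := by
      rw [Metric.mem_ball, Real.dist_eq, abs_of_pos (by linarith)]
      have : s ≤ t₀ + ε/2 := min_le_left _ _
      linarith
    have : s ∈ T := ⟨hs0, hball ⟨hsb, hs0⟩⟩
    exact absurd (le_csSup hbdd this) (not_le.mpr hst)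
  have hFle : infDist (η t₀) K ≤ δ/2 := by
    by_contra h
    exact ht₀T ⟨ht₀0, lt_of_not_ge h⟩
  have hFge : δ/2 ≤ infDist (η t₀) K := by
    by_contra h
    push_neg at h
    have hmem : {r : ℝ | infDist (η r) K < δ/2} ∈ 𝓝[Iic (0:ℝ)] t₀ :=
      (hFcont t₀ ht₀0).preimage_mem_nhdsWithin (Iio_mem_nhds h)
    rw [Metric.mem_nhdsWithin_iff] at hmem
    obtain ⟨ε, hε, hball⟩ := hmem
    obtain ⟨s, hsT, hs⟩ := exists_lt_of_lt_csSup hTne (by linarith : t₀ - ε < t₀)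
    have hst : s ≤ t₀ := le_csSup hbdd hsT
    have hsb : s ∈ Metric.ball t₀ ε := by
      rw [Metric.mem_ball, Real.dist_eq, abs_of_nonpos (by linarith)]
      linarith
    have := hball ⟨hsb, hsT.1⟩
    exact absurd hsT.2 (not_lt.mpr (le_of_lt this))
  have hft₀ : f (η t₀) = 0 := by
    apply hfK
    intro hmem
    have := infDist_zero_of_mem hmem
    rw [this] at hFge
    linarith
  -- the truncated trajectory
  refine ⟨fun s => η (max s t₀), fun s => if t₀ < s then v s else 0, ?_, ?_, ?_, ?_, ?_, ?_⟩
  · intro s hs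
    exact hηΩ _ (max_le hs ht₀0)
  · show η (max 0 t₀) = z
    rw [max_eq_left ht₀0, hη0]
  · intro t ht
    have hind : (fun s => if t₀ < s then v s else 0) = (Set.Ioi t₀).indicator v := by
      funext s; simp [Set.indicator_apply, Set.mem_Ioi]
    rw [hind]
    exact (hvint t ht).indicator measurableSet_Ioi
  · intro t ht
    show η (max 0 t₀) - η (max t t₀) = _
    rw [max_eq_left ht₀0]
    rcases le_or_gt t₀ t with h | h
    · rw [max_eq_left h]
      rw [show (∫ s in Set.Ioc t 0, (fun s => if t₀ < s then v s else 0) s)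
          = ∫ s in Set.Ioc t 0, v s from setIntegral_congr_fun measurableSet_Ioc
          (fun s hs => by simp [lt_of_le_of_lt h hs.1])]
      exact hηint t ht
    · rw [max_eq_right h.le]
      have hsplit : Set.Ioc t 0 = Set.Ioc t t₀ ∪ Set.Ioc t₀ 0 :=
        (Set.Ioc_union_Ioc_eq_Ioc h.le ht₀0).symm
      have hint' : MeasureTheory.IntegrableOn (fun s => if t₀ < s then v s else 0)
          (Set.Ioc t 0) := by
        have hind : (fun s => if t₀ < s then v s else 0) = (Set.Ioi t₀).indicator v := by
          funext s; simp [Set.indicator_apply, Set.mem_Ioi]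
        rw [hind]; exact (hvint t ht).indicator measurableSet_Ioi
      rw [hsplit, setIntegral_union (Set.Ioc_disjoint_Ioc_of_le le_rfl) measurableSet_Ioc
        (hint'.mono_set (by rw [hsplit]; exact subset_union_left))
        (hint'.mono_set (by rw [hsplit]; exact subset_union_right))]
      have h1 : ∫ s in Set.Ioc t t₀, (if t₀ < s then v s else 0) = 0 := by
        rw [setIntegral_congr_fun measurableSet_Ioc (g := fun _ => (0:EuclideanSpace ℝ (Fin n)))
          (fun s hs => by simp [not_lt.mpr hs.2])]
        simp
      have h2 : ∫ s in Set.Ioc t₀ 0, (if t₀ < s then v s else 0) = ∫ s in Set.Ioc t₀ 0, v s := by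
        apply setIntegral_congr_fun measurableSet_Ioc
        intro s hs; simp [hs.1]
      rw [h1, h2, zero_add, ← hηint t₀ ht₀0, hη0]
  · intro s hs
    show infDist (η (max s t₀)) K ≤ δ/2
    rcases le_or_gt s t₀ with h | h
    · rw [max_eq_right h]; exact hFle
    · rw [max_eq_left h.le]
      by_contra hgt
      push_neg at hgt
      have : s ∈ T := ⟨hs, hgt⟩
      exact absurd (le_csSup hbdd this) (not_le.mpr h)
  · apply lintegral_mono
    intro s
    show ENNReal.ofReal (Real.exp (lam * s) * (cp * ‖if t₀ < s then v s else 0‖ ^ q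
        + f (η (max s t₀)))) ≤ _
    rcases le_or_gt s t₀ with h | h
    · rw [max_eq_right h, if_neg (not_lt.mpr h)]
      apply ENNReal.ofReal_le_ofReal
      rw [norm_zero, Real.zero_rpow hq0, mul_zero, zero_add, hft₀, mul_zero]
      exact mul_nonneg (Real.exp_pos _).le (add_nonneg
        (mul_nonneg hcp (Real.rpow_nonneg (norm_nonneg _) q)) (hf0 _))
    · rw [max_eq_left h.le, if_pos h]


set_option maxHeartbeats 1000000 in
lemma key_short {n : ℕ} {Ω : Set (EuclideanSpace ℝ (Fin n))}
    {q cp lam : ℝ} (hq0 : q ≠ 0) (hcp : 0 ≤ cp) (hlam : 0 < lam)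
    {f : EuclideanSpace ℝ (Fin n) → ℝ} (hf0 : ∀ w, 0 ≤ f w)
    {K : Set (EuclideanSpace ℝ (Fin n))} (hKne : K.Nonempty)
    (hfK : ∀ w, w ∉ K → f w = 0)
    {cf : ℝ} (hcf : 0 ≤ cf) (hf_sc : SemicOn f Ω cf)
    {δ : ℝ} (hδ : 0 < δ) (hthick : Metric.thickening δ K ⊆ Ω) (hΩo : IsOpen Ω)
    {u : EuclideanSpace ℝ (Fin n) → ℝ}
    (hu : ∀ x ∈ closure Ω, u x = (sInf (costSet Ω q cp lam f x)).toReal) :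
    ∀ x y, segment ℝ x y ⊆ Ω → ‖x - y‖ < δ/2 → ∀ t ∈ Icc (0:ℝ) 1,
      t * u x + (1 - t) * u y - u (t • x + (1 - t) • y) ≤
        t * (1 - t) * (cf / lam * ‖x - y‖ ^ 2 / 2) := by
  intro x y hseg hxy t ht
  obtain ⟨ht0, ht1⟩ := ht
  have hxΩ : x ∈ Ω := hseg (left_mem_segment ℝ x y)
  have hyΩ : y ∈ Ω := hseg (right_mem_segment ℝ x y)
  set z := t • x + (1 - t) • y with hz
  have hzΩ : z ∈ Ω := hseg ⟨t, 1 - t, ht0, by linarith, by ring, rfl⟩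
  have hxz : x - z = (1 - t) • (x - y) := by rw [hz]; module
  have hyz : y - z = t • (y - x) := by rw [hz]; module
  have hnxz : ‖x - z‖ ≤ ‖x - y‖ := by
    rw [hxz, norm_smul, Real.norm_eq_abs, abs_of_nonneg (by linarith)]
    nlinarith [norm_nonneg (x - y)]
  have hnyz : ‖y - z‖ ≤ ‖x - y‖ := by
    rw [hyz, norm_smul, Real.norm_eq_abs, abs_of_nonneg ht0, norm_sub_rev]
    nlinarith [norm_nonneg (x - y)]
  have hSle : ∀ w ∈ closure Ω, sInf (costSet Ω q cp lam f w) ≤ ENNReal.ofReal (f w / lam) :=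
    fun w hw => sInf_le (const_traj_mem hq0 hlam hw)
  have hSz_ne : sInf (costSet Ω q cp lam f z) ≠ ⊤ :=
    ne_top_of_le_ne_top ENNReal.ofReal_ne_top (hSle z (subset_closure hzΩ))
  by_cases hcase : infDist z K < δ / 2
  swap
  · -- far case : all of x, y outside K
    push_neg at hcase
    have hzero : ∀ w ∈ Ω, ‖w - z‖ ≤ ‖x - y‖ → u w = 0 := by
      intro w hw hn
      have hwK : w ∉ K := by
        intro hmem
        have h2 : infDist z K ≤ dist z w := infDist_le_dist_of_mem hmem
        rw [dist_eq_norm, norm_sub_rev] at h2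
        linarith
      have := hSle w (subset_closure hw)
      rw [hfK w hwK] at this
      simp only [zero_div, ENNReal.ofReal_zero, le_zero_iff] at this
      rw [hu w (subset_closure hw), this, ENNReal.toReal_zero]
    have hux : u x = 0 := hzero x hxΩ hnxz
    have huy : u y = 0 := hzero y hyΩ hnyz
    have huz : 0 ≤ u z := by rw [hu z (subset_closure hzΩ)]; exact ENNReal.toReal_nonneg
    have hRHS : 0 ≤ t * (1 - t) * (cf / lam * ‖x - y‖ ^ 2 / 2) := by
      apply mul_nonneg (mul_nonneg ht0 (by linarith))
      have : 0 ≤ cf / lam := div_nonneg hcf hlam.le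
      positivity
    rw [hux, huy]
    linarith
  · refine le_of_forall_pos_le_add fun ε hε => ?_
    have hlt : sInf (costSet Ω q cp lam f z) < sInf (costSet Ω q cp lam f z)
        + ENNReal.ofReal ε :=
      ENNReal.lt_add_right hSz_ne (ne_of_gt (ENNReal.ofReal_pos.mpr hε))
    obtain ⟨c, hcS, hclt⟩ := sInf_lt_iff.mp hlt
    obtain ⟨η₀, v₀, hη₀Ω, hη₀0, hv₀int, hη₀int, hccost⟩ := hcS
    obtain ⟨η, v, hηΩ, hη0, hvint, hηint, hconf, hcost⟩ :=
      confine hq0 hcp hf0 hfK hδ hcase hη₀Ω hη₀0 hv₀int hη₀int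
    have hcost' : (∫⁻ s in Set.Iic (0:ℝ),
        ENNReal.ofReal (Real.exp (lam * s) * (cp * ‖v s‖ ^ q + f (η s)))) ≤ c := by
      rw [hccost]; exact hcost
    -- shifted trajectories and memberships
    have hshift : ∀ w : EuclideanSpace ℝ (Fin n), ‖w - z‖ ≤ ‖x - y‖ →
        (∫⁻ s in Set.Iic (0:ℝ), ENNReal.ofReal (Real.exp (lam * s)
          * (cp * ‖v s‖ ^ q + f (η s + (w - z))))) ∈ costSet Ω q cp lam f w := by
      intro w hn
      refine ⟨fun s => η s + (w - z), v, ?_, ?_, hvint, ?_, rfl⟩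
      · intro s hs
        apply subset_closure
        apply hthick
        rw [mem_thickening_iff_infDist_lt hKne]
        calc infDist (η s + (w - z)) K ≤ infDist (η s) K + dist (η s + (w - z)) (η s) :=
              infDist_le_infDist_add_dist
          _ ≤ δ/2 + ‖w - z‖ := by
              rw [dist_eq_norm, add_sub_cancel_left]
              exact add_le_add (hconf s hs) le_rfl
          _ < δ := by linarith
      · show η 0 + (w - z) = w
        rw [hη0]; abel
      · intro t' ht'
        show (η 0 + (w - z)) - (η t' + (w - z)) = _
        have h1 : (η 0 + (w - z)) - (η t' + (w - z)) = η 0 - η t' := by abel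
        rw [h1]; exact hηint t' ht'
    have hmemx := hshift x hnxz
    have hmemy := hshift y hnyz
    set c₀ : ℝ := t * (1 - t) * (cf * ‖x - y‖ ^ 2 / 2) with hc₀def
    have hc₀ : 0 ≤ c₀ := by
      apply mul_nonneg (mul_nonneg ht0 (by linarith)); positivity
    have hA : ∀ s : ℝ, 0 ≤ cp * ‖v s‖ ^ q :=
      fun s => mul_nonneg hcp (Real.rpow_nonneg (norm_nonneg _) q)
    have hpt : ∀ s ∈ Iic (0:ℝ),
        ENNReal.ofReal t * ENNReal.ofReal (Real.exp (lam * s)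
            * (cp * ‖v s‖ ^ q + f (η s + (x - z)))) +
          ENNReal.ofReal (1 - t) * ENNReal.ofReal (Real.exp (lam * s)
            * (cp * ‖v s‖ ^ q + f (η s + (y - z)))) ≤
        ENNReal.ofReal (Real.exp (lam * s) * (cp * ‖v s‖ ^ q + f (η s))) +
          ENNReal.ofReal (Real.exp (lam * s) * c₀) := by
      intro s hs
      have hsub : segment ℝ (η s + (x - z)) (η s + (y - z)) ⊆ Ω := by
        rintro p ⟨a, b, ha, hb, hab, rfl⟩
        apply hthick
        rw [mem_thickening_iff_infDist_lt hKne]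
        have hb' : b = 1 - a := by linarith
        have hrep : a • (η s + (x - z)) + b • (η s + (y - z)) - η s
            = a • (x - z) + b • (y - z) := by
          rw [hb']; module
        calc infDist (a • (η s + (x - z)) + b • (η s + (y - z))) K
            ≤ infDist (η s) K + dist (a • (η s + (x - z)) + b • (η s + (y - z))) (η s) :=
              infDist_le_infDist_add_dist
          _ ≤ δ/2 + ‖a • (x - z) + b • (y - z)‖ := by
              rw [dist_eq_norm, hrep]
              exact add_le_add (hconf s hs) le_rfl
          _ ≤ δ/2 + (a * ‖x - z‖ + b * ‖y - z‖) := by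
              have := norm_add_le (a • (x - z)) (b • (y - z))
              rw [norm_smul, norm_smul, Real.norm_eq_abs, Real.norm_eq_abs,
                abs_of_nonneg ha, abs_of_nonneg hb] at this
              linarith
          _ ≤ δ/2 + ‖x - y‖ := by nlinarith [hnxz, hnyz, norm_nonneg (x - y)]
          _ < δ := by linarith
      have hcomb : t • (η s + (x - z)) + (1 - t) • (η s + (y - z)) = η s := by
        rw [hz]; module
      have hdiff : (η s + (x - z)) - (η s + (y - z)) = x - y := by module
      have hfs := hf_sc _ _ hsub t ⟨ht0, ht1⟩
      rw [hcomb, hdiff] at hfs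
      have hexp := (Real.exp_pos (lam * s)).le
      have h2 : t * (cp * ‖v s‖ ^ q + f (η s + (x - z)))
          + (1 - t) * (cp * ‖v s‖ ^ q + f (η s + (y - z)))
          ≤ (cp * ‖v s‖ ^ q + f (η s)) + c₀ := by nlinarith [hfs]
      have hreal : t * (Real.exp (lam * s) * (cp * ‖v s‖ ^ q + f (η s + (x - z))))
          + (1 - t) * (Real.exp (lam * s) * (cp * ‖v s‖ ^ q + f (η s + (y - z))))
          ≤ Real.exp (lam * s) * (cp * ‖v s‖ ^ q + f (η s))
            + Real.exp (lam * s) * c₀ := by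
        have h3 := mul_le_mul_of_nonneg_left h2 hexp
        nlinarith [h3]
      have hGx : 0 ≤ Real.exp (lam * s) * (cp * ‖v s‖ ^ q + f (η s + (x - z))) :=
        mul_nonneg hexp (add_nonneg (hA s) (hf0 _))
      have hGy : 0 ≤ Real.exp (lam * s) * (cp * ‖v s‖ ^ q + f (η s + (y - z))) :=
        mul_nonneg hexp (add_nonneg (hA s) (hf0 _))
      have hG : 0 ≤ Real.exp (lam * s) * (cp * ‖v s‖ ^ q + f (η s)) :=
        mul_nonneg hexp (add_nonneg (hA s) (hf0 _))
      rw [← ENNReal.ofReal_mul ht0, ← ENNReal.ofReal_mul (by linarith : (0:ℝ) ≤ 1 - t),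
        ← ENNReal.ofReal_add (mul_nonneg ht0 hGx) (mul_nonneg (by linarith) hGy),
        ← ENNReal.ofReal_add hG (mul_nonneg hexp hc₀)]
      exact ENNReal.ofReal_le_ofReal hreal
    have hmeas : AEMeasurable (fun s => ENNReal.ofReal (Real.exp (lam * s) * c₀))
        (volume.restrict (Iic (0:ℝ))) :=
      (ENNReal.continuous_ofReal.comp ((Real.continuous_exp.comp
        (continuous_const.mul continuous_id)).mul continuous_const)).aemeasurable
    have hexpint : (∫⁻ s in Set.Iic (0:ℝ), ENNReal.ofReal (Real.exp (lam * s) * c₀))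
        = ENNReal.ofReal (c₀ * (1 / lam)) := by
      have h1 : ∀ s : ℝ, ENNReal.ofReal (Real.exp (lam * s) * c₀)
          = ENNReal.ofReal (Real.exp (lam * s)) * ENNReal.ofReal c₀ :=
        fun s => ENNReal.ofReal_mul (Real.exp_pos _).le
      simp only [h1]
      rw [lintegral_mul_const' _ _ ENNReal.ofReal_ne_top, lintegral_exp_mul_Iic hlam,
        ← ENNReal.ofReal_mul (by positivity), mul_comm]
    have hchain : ENNReal.ofReal t * sInf (costSet Ω q cp lam f x)
        + ENNReal.ofReal (1 - t) * sInf (costSet Ω q cp lam f y)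
        ≤ (sInf (costSet Ω q cp lam f z) + ENNReal.ofReal ε)
          + ENNReal.ofReal (c₀ * (1 / lam)) := by
      calc ENNReal.ofReal t * sInf (costSet Ω q cp lam f x)
            + ENNReal.ofReal (1 - t) * sInf (costSet Ω q cp lam f y)
          ≤ ENNReal.ofReal t * (∫⁻ s in Set.Iic (0:ℝ), ENNReal.ofReal (Real.exp (lam * s)
              * (cp * ‖v s‖ ^ q + f (η s + (x - z)))))
            + ENNReal.ofReal (1 - t) * (∫⁻ s in Set.Iic (0:ℝ),
              ENNReal.ofReal (Real.exp (lam * s) * (cp * ‖v s‖ ^ q + f (η s + (y - z))))) :=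
            add_le_add (mul_le_mul_right (sInf_le hmemx) _) (mul_le_mul_right (sInf_le hmemy) _)
        _ = (∫⁻ s in Set.Iic (0:ℝ), ENNReal.ofReal t * ENNReal.ofReal (Real.exp (lam * s)
              * (cp * ‖v s‖ ^ q + f (η s + (x - z)))))
            + ∫⁻ s in Set.Iic (0:ℝ), ENNReal.ofReal (1 - t)
              * ENNReal.ofReal (Real.exp (lam * s) * (cp * ‖v s‖ ^ q + f (η s + (y - z)))) := by
            rw [lintegral_const_mul' _ _ ENNReal.ofReal_ne_top,
              lintegral_const_mul' _ _ ENNReal.ofReal_ne_top]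
        _ ≤ ∫⁻ s in Set.Iic (0:ℝ), (ENNReal.ofReal t * ENNReal.ofReal (Real.exp (lam * s)
              * (cp * ‖v s‖ ^ q + f (η s + (x - z))))
            + ENNReal.ofReal (1 - t) * ENNReal.ofReal (Real.exp (lam * s)
              * (cp * ‖v s‖ ^ q + f (η s + (y - z))))) := le_lintegral_add _ _
        _ ≤ ∫⁻ s in Set.Iic (0:ℝ), (ENNReal.ofReal (Real.exp (lam * s)
              * (cp * ‖v s‖ ^ q + f (η s)))
            + ENNReal.ofReal (Real.exp (lam * s) * c₀)) :=
            lintegral_mono_ae ((ae_restrict_iff' measurableSet_Iic).2 (ae_of_all _ hpt))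
        _ = (∫⁻ s in Set.Iic (0:ℝ), ENNReal.ofReal (Real.exp (lam * s)
              * (cp * ‖v s‖ ^ q + f (η s))))
            + ∫⁻ s in Set.Iic (0:ℝ), ENNReal.ofReal (Real.exp (lam * s) * c₀) :=
            lintegral_add_right' _ hmeas
        _ ≤ c + ENNReal.ofReal (c₀ * (1 / lam)) := by
            rw [hexpint]; exact add_le_add hcost' le_rfl
        _ ≤ (sInf (costSet Ω q cp lam f z) + ENNReal.ofReal ε)
            + ENNReal.ofReal (c₀ * (1 / lam)) := add_le_add hclt.le le_rfl
    have hR_ne : (sInf (costSet Ω q cp lam f z) + ENNReal.ofReal ε)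
        + ENNReal.ofReal (c₀ * (1 / lam)) ≠ ⊤ :=
      ENNReal.add_ne_top.2 ⟨ENNReal.add_ne_top.2 ⟨hSz_ne, ENNReal.ofReal_ne_top⟩,
        ENNReal.ofReal_ne_top⟩
    have hA_ne : ENNReal.ofReal t * sInf (costSet Ω q cp lam f x) ≠ ⊤ :=
      ne_top_of_le_ne_top hR_ne ((le_add_right le_rfl).trans hchain)
    have hB_ne : ENNReal.ofReal (1 - t) * sInf (costSet Ω q cp lam f y) ≠ ⊤ :=
      ne_top_of_le_ne_top hR_ne ((le_add_left le_rfl).trans hchain)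
    have hfinal := ENNReal.toReal_mono hR_ne hchain
    rw [ENNReal.toReal_add hA_ne hB_ne, ENNReal.toReal_mul, ENNReal.toReal_mul,
      ENNReal.toReal_ofReal ht0, ENNReal.toReal_ofReal (by linarith : (0:ℝ) ≤ 1 - t),
      ENNReal.toReal_add (ENNReal.add_ne_top.2 ⟨hSz_ne, ENNReal.ofReal_ne_top⟩)
        ENNReal.ofReal_ne_top,
      ENNReal.toReal_add hSz_ne ENNReal.ofReal_ne_top, ENNReal.toReal_ofReal hε.le,
      ENNReal.toReal_ofReal (mul_nonneg hc₀ (by positivity))] at hfinal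
    rw [hu x (subset_closure hxΩ), hu y (subset_closure hyΩ), hu z (subset_closure hzΩ)]
    have hc₀lam : c₀ * (1 / lam) = t * (1 - t) * (cf / lam * ‖x - y‖ ^ 2 / 2) := by
      rw [hc₀def]; ring
    linarith


set_option maxHeartbeats 1000000 in
/-- The value function of the infinite-horizon state-constrained control
problem with running cost `c_p|v|^q + f(x)` (where `q = p/(p−1)` and
`c_p = p^{−1/(p−1)}(1 − 1/p)`), for nonnegative, compactly supported, semiconcave data `f`
with constant `c_f`, is semiconcave in `Ω` with constant `c_f/λ`.
Absolutely continuous trajectories `η : (−∞,0] → cl Ω` are encoded by an a.e. derivative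
`v` which is integrable on compact subintervals, with `η` recovered by integration;
the (possibly infinite) cost is expressed as a lower integral in `ℝ≥0∞`. -/
theorem value_function_semiconcave {n : ℕ} (Ω : Set (EuclideanSpace ℝ (Fin n)))
    (hΩo : IsOpen Ω) (hΩb : IsBounded Ω)
    (p q cp lam : ℝ) (hp : 1 < p) (hq : q = p / (p - 1))
    (hcp : cp = p ^ (-(1 : ℝ) / (p - 1)) * (1 - 1 / p)) (hlam : 0 < lam)
    (f : EuclideanSpace ℝ (Fin n) → ℝ) (hf_cont : ContinuousOn f (closure Ω))
    (hf_nonneg : ∀ x ∈ closure Ω, 0 ≤ f x)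
    (hf_supp : ∃ K : Set (EuclideanSpace ℝ (Fin n)),
      IsCompact K ∧ K ⊆ Ω ∧ ∀ x, x ∉ K → f x = 0)
    (cf : ℝ) (hf_sc : SemicOn f Ω cf)
    (u : EuclideanSpace ℝ (Fin n) → ℝ)
    (hu : ∀ x ∈ closure Ω, u x =
      (sInf {c : ℝ≥0∞ | ∃ η v : ℝ → EuclideanSpace ℝ (Fin n),
        (∀ s ≤ (0:ℝ), η s ∈ closure Ω) ∧ η 0 = x ∧
        (∀ t ≤ (0:ℝ), MeasureTheory.IntegrableOn v (Set.Ioc t 0)) ∧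
        (∀ t ≤ (0:ℝ), η 0 - η t = ∫ s in Set.Ioc t 0, v s) ∧
        c = ∫⁻ s in Set.Iic (0:ℝ),
              ENNReal.ofReal (Real.exp (lam * s) * (cp * ‖v s‖ ^ q + f (η s)))}).toReal) :
    SemicOn u Ω (cf / lam) := by
  obtain ⟨K, hKc, hKΩ, hfK⟩ := hf_supp
  have hp0 : 0 < p := by linarith
  have hp1 : 0 < p - 1 := by linarith
  have hq0 : q ≠ 0 := by
    rw [hq]; exact ne_of_gt (div_pos hp0 hp1)
  have hcp0 : 0 ≤ cp := by
    rw [hcp]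
    apply mul_nonneg (Real.rpow_nonneg hp0.le _)
    have : 1 / p < 1 := by rw [div_lt_one hp0]; linarith
    linarith
  have hf0 : ∀ w, 0 ≤ f w := by
    intro w
    by_cases hw : w ∈ closure Ω
    · exact hf_nonneg w hw
    · rw [hfK w (fun hK => hw (subset_closure (hKΩ hK)))]
  have hu' : ∀ x ∈ closure Ω, u x = (sInf (costSet Ω q cp lam f x)).toReal := hu
  intro x y hseg t ht
  -- trivial case x = y
  by_cases hxy0 : x = y
  · subst hxy0
    have hcombo : t • x + (1 - t) • x = x := by module
    rw [hcombo, sub_self, norm_zero]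
    have h1 : t * u x + (1 - t) * u x - u x = 0 := by ring
    have h2 : t * (1 - t) * (cf / lam * 0 ^ 2 / 2) = 0 := by ring
    rw [h1, h2]
  have hxΩ : x ∈ Ω := hseg (left_mem_segment ℝ x y)
  have hyΩ : y ∈ Ω := hseg (right_mem_segment ℝ x y)
  have hne : ‖x - y‖ ≠ 0 := fun h => hxy0 (sub_eq_zero.mp (norm_eq_zero.mp h))
  have hnpos : 0 < ‖x - y‖ := lt_of_le_of_ne (norm_nonneg _) (Ne.symm hne)
  -- a ball inside Ω on which f vanishes
  obtain ⟨z₀, r, hr, hball, hzero⟩ : ∃ z₀ r, 0 < r ∧ ball z₀ r ⊆ Ω ∧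
      ∀ w ∈ ball z₀ r, f w = 0 := by
    by_cases hKne : K.Nonempty
    · -- find a frontier point
      obtain ⟨R, hR⟩ := hΩb.subset_ball 0
      have hRx : ‖x‖ < R := by simpa [dist_zero_right] using hR hxΩ
      have hR0 : 0 < R := lt_of_le_of_lt (norm_nonneg x) hRx
      set w₀ := x + ((R + ‖x‖ + 1) / ‖x - y‖) • (x - y) with hw₀def
      have hvn : ‖((R + ‖x‖ + 1) / ‖x - y‖) • (x - y)‖ = R + ‖x‖ + 1 := by
        rw [norm_smul, Real.norm_eq_abs, abs_of_nonneg (by positivity),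
          div_mul_cancel₀ _ hne]
      have hw₀norm : R + 1 ≤ ‖w₀‖ := by
        have h1 := norm_sub_le w₀ x
        have h2 : w₀ - x = ((R + ‖x‖ + 1) / ‖x - y‖) • (x - y) := by rw [hw₀def]; abel
        rw [h2, hvn] at h1
        linarith
      have hw₀Ω : w₀ ∉ Ω := by
        intro h
        have := hR h
        rw [mem_ball, dist_zero_right] at this
        linarith
      have hΩne_univ : Ω ≠ univ := fun h => hw₀Ω (h ▸ mem_univ w₀)
      obtain ⟨w, hwf⟩ := nonempty_frontier_iff.mpr ⟨⟨x, hxΩ⟩, hΩne_univ⟩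
      have hwcl : w ∈ closure Ω := frontier_subset_closure hwf
      have hwΩ : w ∉ Ω := by
        rw [hΩo.frontier_eq] at hwf
        exact hwf.2
      have hwK : w ∉ K := fun h => hwΩ (hKΩ h)
      have hdK : 0 < infDist w K := (hKc.isClosed.notMem_iff_infDist_pos hKne).1 hwK
      obtain ⟨z₀, hz₀Ω, hz₀w⟩ := Metric.mem_closure_iff.mp hwcl (infDist w K / 2)
        (by positivity)
      obtain ⟨r₁, hr₁, hball₁⟩ := Metric.isOpen_iff.mp hΩo z₀ hz₀Ω
      refine ⟨z₀, min r₁ (infDist w K / 2), lt_min hr₁ (by positivity),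
        fun p hp' => hball₁ (mem_ball.2 (lt_of_lt_of_le (mem_ball.1 hp') (min_le_left _ _))),
        ?_⟩
      intro v hv
      apply hfK
      intro hvK
      have h1 : dist w v ≤ dist w z₀ + dist z₀ v := dist_triangle _ _ _
      have h2 : dist z₀ v < infDist w K / 2 := by
        rw [dist_comm]
        exact lt_of_lt_of_le (mem_ball.1 hv) (min_le_right _ _)
      have h3 : infDist w K ≤ dist w v := infDist_le_dist_of_mem hvK
      linarith
    · obtain ⟨r₁, hr₁, hball₁⟩ := Metric.isOpen_iff.mp hΩo x hxΩ
      exact ⟨x, r₁, hr₁, hball₁, fun w _ => hfK w (fun h => hKne ⟨w, h⟩)⟩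
  -- derive cf ≥ 0
  have hcf : 0 ≤ cf := by
    set h : EuclideanSpace ℝ (Fin n) := (r/2) • ‖x - y‖⁻¹ • (x - y) with hhdef
    have hnh : ‖h‖ = r / 2 := by
      rw [hhdef, norm_smul, norm_smul, Real.norm_eq_abs, Real.norm_eq_abs,
        abs_of_nonneg (by positivity), abs_of_nonneg (by positivity),
        inv_mul_cancel₀ hne, mul_one]
    have hmema : z₀ + h ∈ ball z₀ r := by
      rw [mem_ball, dist_eq_norm, add_sub_cancel_left, hnh]
      linarith
    have hmemb : z₀ - h ∈ ball z₀ r := by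
      rw [mem_ball, dist_eq_norm, sub_sub_cancel_left, norm_neg, hnh]
      linarith
    have hsegsub : segment ℝ (z₀ + h) (z₀ - h) ⊆ Ω :=
      fun p hp' => hball ((convex_ball z₀ r).segment_subset hmema hmemb hp')
    have hsc := hf_sc (z₀ + h) (z₀ - h) hsegsub (1/2) ⟨by norm_num, by norm_num⟩
    have hmid : (1/2 : ℝ) • (z₀ + h) + (1 - 1/2 : ℝ) • (z₀ - h) = z₀ := by
      norm_num; module
    have hdiffn : ‖(z₀ + h) - (z₀ - h)‖ = r := by
      have h1 : (z₀ + h) - (z₀ - h) = (2:ℝ) • h := by module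
      rw [h1, norm_smul, Real.norm_eq_abs, abs_of_nonneg (by norm_num : (0:ℝ) ≤ 2), hnh]
      ring
    rw [hmid, hdiffn, hzero _ hmema, hzero _ hmemb,
      hzero _ (mem_ball.2 (by rw [dist_self]; exact hr))] at hsc
    nlinarith [hsc, pow_pos hr 2]
  -- case K = ∅
  by_cases hKne : K.Nonempty
  swap
  · have hfzero : ∀ w, f w = 0 := fun w => hfK w (fun h => hKne ⟨w, h⟩)
    have huzero : ∀ w ∈ closure Ω, u w = 0 := by
      intro w hw
      have h1 := sInf_le (const_traj_mem hq0 hlam hw (f := f) (Ω := Ω) (q := q) (cp := cp))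
      rw [hfzero w] at h1
      simp only [zero_div, ENNReal.ofReal_zero, le_zero_iff] at h1
      rw [hu' w hw, h1, ENNReal.toReal_zero]
    have hzΩ : t • x + (1 - t) • y ∈ Ω := hseg ⟨t, 1 - t, ht.1, by linarith [ht.2], by ring, rfl⟩
    rw [huzero x (subset_closure hxΩ), huzero y (subset_closure hyΩ),
      huzero _ (subset_closure hzΩ)]
    have : 0 ≤ t * (1 - t) * (cf / lam * ‖x - y‖ ^ 2 / 2) := by
      apply mul_nonneg (mul_nonneg ht.1 (by linarith [ht.2]))
      have : 0 ≤ cf / lam := div_nonneg hcf hlam.le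
      positivity
    linarith
  -- main case
  obtain ⟨δ, hδ, hthick⟩ := hKc.exists_thickening_subset_open hΩo hKΩ
  have hks := key_short hq0 hcp0 hlam hf0 hKne hfK hcf hf_sc hδ hthick hΩo hu'
  -- gluing along the segment
  set C : ℝ := cf / lam * ‖x - y‖ ^ 2 / 2 with hCdef
  set γ : ℝ → EuclideanSpace ℝ (Fin n) := fun θ => x + θ • (y - x) with hγdef
  have hγseg : ∀ θ ∈ Icc (0:ℝ) 1, γ θ ∈ segment ℝ x y := by
    intro θ hθ
    exact ⟨1 - θ, θ, by linarith [hθ.2], hθ.1, by ring, by rw [hγdef]; module⟩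
  set g : ℝ → ℝ := fun θ => C * θ^2 - u (γ θ) with hgdef
  have hρ : 0 < δ / (4 * ‖x - y‖) := by positivity
  have hconv : ConvexOn ℝ (Icc (0:ℝ) 1) g := by
    apply convexOn_of_locally hρ
    intro a b ha hb hab
    refine ⟨convex_Icc a b, ?_⟩
    intro p' hp' q' hq' s1 s2 hs1 hs2 hsum
    simp only [smul_eq_mul]
    have hp01 : p' ∈ Icc (0:ℝ) 1 := ⟨le_trans ha hp'.1, le_trans hp'.2 hb⟩
    have hq01 : q' ∈ Icc (0:ℝ) 1 := ⟨le_trans ha hq'.1, le_trans hq'.2 hb⟩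
    have hsegsub : segment ℝ (γ p') (γ q') ⊆ Ω :=
      fun w hw => hseg ((convex_segment x y).segment_subset (hγseg p' hp01) (hγseg q' hq01) hw)
    have hγdiff : γ p' - γ q' = (p' - q') • (y - x) := by rw [hγdef]; module
    have hγnorm : ‖γ p' - γ q'‖ = |p' - q'| * ‖x - y‖ := by
      rw [hγdiff, norm_smul, Real.norm_eq_abs, norm_sub_rev]
    have hdist : ‖γ p' - γ q'‖ < δ / 2 := by
      rw [hγnorm]
      have h1 : |p' - q'| ≤ b - a := abs_le.2 ⟨by linarith [hp'.1, hp'.2, hq'.1, hq'.2],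
        by linarith [hp'.1, hp'.2, hq'.1, hq'.2]⟩
      have h2 : |p' - q'| * ‖x - y‖ ≤ (δ / (4 * ‖x - y‖)) * ‖x - y‖ := by
        apply mul_le_mul_of_nonneg_right (le_trans h1 hab) (norm_nonneg _)
      have h3 : (δ / (4 * ‖x - y‖)) * ‖x - y‖ = δ / 4 := by field_simp
      rw [h3] at h2
      linarith
    have hs2' : s2 = 1 - s1 := by linarith
    have hksa := hks (γ p') (γ q') hsegsub hdist s1 ⟨hs1, by linarith⟩
    have hcombo : s1 • γ p' + (1 - s1) • γ q' = γ (s1 * p' + s2 * q') := by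
      rw [hγdef, hs2']; module
    rw [hcombo] at hksa
    have hsq : ‖γ p' - γ q'‖ ^ 2 = (p' - q')^2 * ‖x - y‖^2 := by
      rw [hγnorm, mul_pow, sq_abs]
    rw [hsq] at hksa
    have hid : (s1*p'^2 + s2*q'^2 - (s1*p'+s2*q')^2) * C = s1*s2*(p'-q')^2 * C := by
      rw [hs2']; ring
    have hCexp : cf / lam * ((p' - q')^2 * ‖x - y‖^2) / 2 = (p' - q')^2 * C := by
      rw [hCdef]; ring
    rw [hCexp] at hksa
    simp only [hgdef]
    rw [hs2'] at hksa hid ⊢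
    nlinarith [hksa, hid]
  -- conclude
  have h01 : (0:ℝ) ∈ Icc (0:ℝ) 1 := ⟨le_rfl, zero_le_one⟩
  have h11 : (1:ℝ) ∈ Icc (0:ℝ) 1 := ⟨zero_le_one, le_rfl⟩
  have h2 := hconv.2 h01 h11 ht.1 (by linarith [ht.2] : (0:ℝ) ≤ 1 - t) (by ring)
  simp only [smul_eq_mul, mul_zero, mul_one, zero_add] at h2
  have hγ0 : γ 0 = x := by rw [hγdef]; module
  have hγ1 : γ 1 = y := by rw [hγdef]; module
  have hγt : γ (1 - t) = t • x + (1 - t) • y := by rw [hγdef]; module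
  simp only [hgdef, hγ0, hγ1, hγt] at h2
  nlinarith [h2]
end
end
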